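/- arXiv:2407.04358 — 7 statements merged into one kernel-verified Lean document; each statement's English description precedes it below -/
import Mathlib

section
/- Let g : ℝ^d → ℝ be differentiable at x with g(x) > 0, and let σ > 0. Then the function p ↦ (√(g(x)) + (1/(2√(g(x)))) ⟨∇g(x), p⟩)² + ‖p‖²/(2σ) over p ∈ ℝ^d attains its unique global minimum at p = − σ ∇g(x) / (1 + (σ/(2 g(x))) ‖∇g(x)‖²). -/
open scoped RealInnerProductSpace

/-- The NGN model
`p ↦ (√(g(x)) + (1/(2√(g(x)))) ⟨∇g(x), p⟩)² + ‖p‖²/(2σ)` attains its unique global minimum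
at `p = −σ ∇g(x) / (1 + (σ/(2 g(x))) ‖∇g(x)‖²)`. -/
theorem ngn_model_unique_min {d : ℕ} (g : EuclideanSpace ℝ (Fin d) → ℝ)
    (σ : ℝ) (hσ : 0 < σ)
    (x : EuclideanSpace ℝ (Fin d)) (hdiff : DifferentiableAt ℝ g x) (hx : 0 < g x)
    (F : EuclideanSpace ℝ (Fin d) → ℝ)
    (hF : ∀ p, F p = (Real.sqrt (g x) + 1 / (2 * Real.sqrt (g x)) * ⟪gradient g x, p⟫) ^ 2
        + ‖p‖ ^ 2 / (2 * σ))
    (pstar : EuclideanSpace ℝ (Fin d))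
    (hpstar : pstar = -(σ / (1 + σ / (2 * g x) * ‖gradient g x‖ ^ 2)) • gradient g x) :
    (∀ p, F pstar ≤ F p) ∧ (∀ p, p ≠ pstar → F pstar < F p) := by
  set a := gradient g x with ha
  set s := Real.sqrt (g x) with hs
  have hspos : 0 < s := Real.sqrt_pos.mpr hx
  have hs2 : s ^ 2 = g x := Real.sq_sqrt hx.le
  set t := σ / (1 + σ / (2 * g x) * ‖a‖ ^ 2) with htdef
  have hDpos : 0 < 1 + σ / (2 * g x) * ‖a‖ ^ 2 := by positivity
  have h1 : ⟪a, pstar⟫ = -t * ‖a‖ ^ 2 := by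
    rw [hpstar, real_inner_smul_right, real_inner_self_eq_norm_sq]
  have h2 : ‖pstar‖ ^ 2 = t ^ 2 * ‖a‖ ^ 2 := by
    rw [hpstar, norm_smul]
    have : 0 ≤ t := div_nonneg hσ.le hDpos.le
    rw [Real.norm_eq_abs, abs_neg, abs_of_nonneg this]
    ring
  have h3 : ∀ p, ⟪a, p - pstar⟫ = ⟪a, p⟫ + t * ‖a‖ ^ 2 := by
    intro p
    rw [inner_sub_right, h1]; ring
  have h4 : ∀ p : EuclideanSpace ℝ (Fin d),
      ‖p - pstar‖ ^ 2 = ‖p‖ ^ 2 + 2 * t * ⟪a, p⟫ + t ^ 2 * ‖a‖ ^ 2 := by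
    intro p
    have h1' : ⟪p, pstar⟫ = -t * ⟪a, p⟫ := by
      rw [real_inner_comm, hpstar, real_inner_smul_left]
    rw [norm_sub_sq_real, h2, h1']
    ring
  have key : ∀ p, F p = F pstar + (⟪a, p - pstar⟫ / (2 * s)) ^ 2
      + ‖p - pstar‖ ^ 2 / (2 * σ) := by
    intro p
    rw [hF p, hF pstar, h1, h2, h3 p, h4 p]
    rw [htdef, ← hs2]
    have hDpos' : 0 < 1 + σ / (2 * s ^ 2) * ‖a‖ ^ 2 := by positivity
    field_simp
    ring
  constructor
  · intro p
    have h5 : 0 ≤ (⟪a, p - pstar⟫ / (2 * s)) ^ 2 := sq_nonneg _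
    have h6 : 0 ≤ ‖p - pstar‖ ^ 2 / (2 * σ) := by positivity
    rw [key p]; linarith
  · intro p hp
    have h5 : 0 ≤ (⟪a, p - pstar⟫ / (2 * s)) ^ 2 := sq_nonneg _
    have h6 : 0 < ‖p - pstar‖ ^ 2 / (2 * σ) := by
      have : p - pstar ≠ 0 := sub_ne_zero.mpr hp
      have : 0 < ‖p - pstar‖ := norm_pos_iff.mpr this
      positivity
    rw [key p]; linarith
end

section
/- Let g ∈ ℝ^d with g ≠ 0 (or g arbitrary), let σ > 0 and q ≥ 0, and let c ∈ ℝ. Then the quadratic function p ↦ c + ⟨g, p⟩ + (1/2) pᵀ ((1/σ) I + q g gᵀ) p over p ∈ ℝ^d attains its unique global minimum at p = − σ g / (1 + σ q ‖g‖²). -/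
open scoped RealInnerProductSpace

/-- The generalized Gauss–Newton model
`p ↦ c + ⟨g, p⟩ + (1/2) pᵀ ((1/σ) I + q g gᵀ) p` (with `σ > 0`, `q ≥ 0`) attains its unique
global minimum at `p = −σ g / (1 + σ q ‖g‖²)`.  Here `pᵀ ((1/σ) I + q g gᵀ) p` equals
`(1/σ) ‖p‖² + q ⟨g, p⟩²`. -/
theorem ggn_model_unique_min {d : ℕ} (g : EuclideanSpace ℝ (Fin d)) (σ q c : ℝ)
    (hσ : 0 < σ) (hq : 0 ≤ q)
    (F : EuclideanSpace ℝ (Fin d) → ℝ)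
    (hF : ∀ p, F p = c + ⟪g, p⟫ + 1 / 2 * (1 / σ * ‖p‖ ^ 2 + q * ⟪g, p⟫ ^ 2))
    (pstar : EuclideanSpace ℝ (Fin d))
    (hpstar : pstar = -(σ / (1 + σ * q * ‖g‖ ^ 2)) • g) :
    (∀ p, F pstar ≤ F p) ∧ (∀ p, p ≠ pstar → F pstar < F p) := by
  have hG : (0:ℝ) ≤ ‖g‖ ^ 2 := by positivity
  have hA : (0:ℝ) < 1 + σ * q * ‖g‖ ^ 2 := by nlinarith [mul_nonneg (mul_nonneg hσ.le hq) hG]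
  have hA0 : (1 + σ * q * ‖g‖ ^ 2) ≠ 0 := ne_of_gt hA
  have hσ0 : σ ≠ 0 := ne_of_gt hσ
  have hip : ⟪g, pstar⟫ = -(σ / (1 + σ * q * ‖g‖ ^ 2)) * ‖g‖ ^ 2 := by
    rw [hpstar, real_inner_smul_right, real_inner_self_eq_norm_sq]
  have hns : ‖pstar‖ ^ 2 = (σ / (1 + σ * q * ‖g‖ ^ 2)) ^ 2 * ‖g‖ ^ 2 := by
    rw [hpstar, norm_smul]
    rw [mul_pow, Real.norm_eq_abs, abs_neg, sq_abs]
  have key : ∀ p, F p = F pstar + 1 / (2 * σ) * ‖p - pstar‖ ^ 2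
      + q / 2 * (⟪g, p⟫ - ⟪g, pstar⟫) ^ 2 := by
    intro p
    have hnd : ‖p - pstar‖ ^ 2 = ‖p‖ ^ 2 - 2 * ⟪p, pstar⟫ + ‖pstar‖ ^ 2 := by
      rw [← real_inner_self_eq_norm_sq, ← real_inner_self_eq_norm_sq,
        ← real_inner_self_eq_norm_sq, inner_sub_sub_self]
      rw [real_inner_comm pstar p]; ring
    have hpp : ⟪p, pstar⟫ = -(σ / (1 + σ * q * ‖g‖ ^ 2)) * ⟪g, p⟫ := by
      rw [hpstar, real_inner_smul_right, real_inner_comm]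
    rw [hF p, hF pstar, hnd, hpp, hip, hns]
    field_simp
    ring
  constructor
  · intro p
    rw [key p]
    have h1 : 0 ≤ 1 / (2 * σ) * ‖p - pstar‖ ^ 2 := by positivity
    have h2 : 0 ≤ q / 2 * (⟪g, p⟫ - ⟪g, pstar⟫) ^ 2 := by positivity
    linarith
  · intro p hp
    rw [key p]
    have hne : p - pstar ≠ 0 := sub_ne_zero.mpr hp
    have h1 : 0 < 1 / (2 * σ) * ‖p - pstar‖ ^ 2 := by
      have : ‖p - pstar‖ ≠ 0 := norm_ne_zero_iff.mpr hne
      positivity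
    have h2 : 0 ≤ q / 2 * (⟪g, p⟫ - ⟪g, pstar⟫) ^ 2 := by positivity
    linarith
end

section
/- Let g : ℝ^d → ℝ be non-negative, differentiable, L-smooth, let g* = inf_y g(y), let x ∈ ℝ^d with g(x) > 0, let σ > 0, and let γ = σ / (1 + (σ/(2 g(x))) ‖∇g(x)‖²) be the NGN stepsize. Then for every real number δ ≤ 1 one has γ² ‖∇g(x)‖² ≤ 2 γ [δ (σ − γ)/σ + (1 − δ) L γ] (g(x) − g*) + 2 γ δ ((σ − γ)/σ) g*. -/
open scoped RealInnerProductSpace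

lemma descent_lemma {d : ℕ} (g : EuclideanSpace ℝ (Fin d) → ℝ) (L : ℝ)
    (hdiff : Differentiable ℝ g)
    (hsmooth : ∀ x y, ‖gradient g x - gradient g y‖ ≤ L * ‖x - y‖)
    (x v : EuclideanSpace ℝ (Fin d)) :
    g (x + v) ≤ g x + ⟪gradient g x, v⟫ + L / 2 * ‖v‖ ^ 2 := by
  set φ : ℝ → ℝ := fun t => g (x + t • v) - t * ⟪gradient g x, v⟫ - L / 2 * ‖v‖ ^ 2 * t ^ 2 with hφ
  have hc : ∀ t : ℝ, HasDerivAt (fun s : ℝ => x + s • v) v t := by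
    intro t
    simpa using ((hasDerivAt_id t).smul_const v).const_add x
  have hd : ∀ t : ℝ, HasDerivAt φ
      (⟪gradient g (x + t • v), v⟫ - ⟪gradient g x, v⟫ - L / 2 * ‖v‖ ^ 2 * (2 * t)) t := by
    intro t
    have h1 : HasDerivAt (fun s : ℝ => g (x + s • v)) ⟪gradient g (x + t • v), v⟫ t := by
      have := ((hdiff (x + t • v)).hasGradientAt.hasFDerivAt).comp_hasDerivAt t (hc t)
      simp at this ⊢
      exact this
    have h2 : HasDerivAt (fun s : ℝ => s * ⟪gradient g x, v⟫) ⟪gradient g x, v⟫ t := by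
      simpa using (hasDerivAt_id t).mul_const ⟪gradient g x, v⟫
    have h3 : HasDerivAt (fun s : ℝ => L / 2 * ‖v‖ ^ 2 * s ^ 2) (L / 2 * ‖v‖ ^ 2 * (2 * t)) t := by
      simpa [mul_comm, mul_assoc, mul_left_comm] using
        ((hasDerivAt_pow 2 t).const_mul (L / 2 * ‖v‖ ^ 2))
    exact (h1.sub h2).sub h3
  have hanti : AntitoneOn φ (Set.Icc 0 1) := by
    apply antitoneOn_of_deriv_nonpos (convex_Icc 0 1)
    · exact fun t _ => ((hd t).differentiableAt.continuousAt).continuousWithinAt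
    · exact fun t _ => (hd t).differentiableAt.differentiableWithinAt
    · intro t ht
      rw [interior_Icc] at ht
      rw [(hd t).deriv]
      have hb : ⟪gradient g (x + t • v) - gradient g x, v⟫ ≤ L * (t * ‖v‖) * ‖v‖ := by
        calc ⟪gradient g (x + t • v) - gradient g x, v⟫
            ≤ ‖gradient g (x + t • v) - gradient g x‖ * ‖v‖ := real_inner_le_norm _ _
          _ ≤ (L * ‖x + t • v - x‖) * ‖v‖ := by
              apply mul_le_mul_of_nonneg_right (hsmooth _ _) (norm_nonneg v)
          _ = L * (t * ‖v‖) * ‖v‖ := by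
              rw [add_sub_cancel_left, norm_smul, Real.norm_eq_abs, abs_of_pos ht.1]
      rw [inner_sub_left] at hb
      nlinarith [ht.1.le]
  have h01 : φ 1 ≤ φ 0 := hanti (by simp) (by simp) zero_le_one
  simp only [hφ, one_smul, zero_smul, add_zero, one_pow, zero_pow, mul_zero, mul_one,
    sub_zero, zero_mul, one_mul] at h01
  linarith

/-- For a non-negative, differentiable, `L`-smooth `g` with `g(x) > 0`,
`g* = inf g`, and NGN stepsize `γ`, for every `δ ≤ 1`:
`γ² ‖∇g(x)‖² ≤ 2γ [δ(σ−γ)/σ + (1−δ)Lγ] (g(x) − g*) + 2γδ((σ−γ)/σ) g*`. -/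
theorem ngn_delta_inequality {d : ℕ} (g : EuclideanSpace ℝ (Fin d) → ℝ)
    (L σ γ : ℝ) (hL : 0 ≤ L) (hσ : 0 < σ)
    (hdiff : Differentiable ℝ g)
    (hnonneg : ∀ y, 0 ≤ g y)
    (hsmooth : ∀ x y, ‖gradient g x - gradient g y‖ ≤ L * ‖x - y‖)
    (x : EuclideanSpace ℝ (Fin d)) (hx : 0 < g x)
    (hγ : γ = σ / (1 + σ / (2 * g x) * ‖gradient g x‖ ^ 2)) :
    ∀ δ : ℝ, δ ≤ 1 →
      γ ^ 2 * ‖gradient g x‖ ^ 2 ≤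
        2 * γ * (δ * ((σ - γ) / σ) + (1 - δ) * L * γ) * (g x - ⨅ y, g y)
          + 2 * γ * δ * ((σ - γ) / σ) * (⨅ y, g y) := by
  intro δ hδ
  set G := ‖gradient g x‖ ^ 2 with hG
  set gi := ⨅ y, g y with hgi
  have hGnn : 0 ≤ G := sq_nonneg _
  have hbdd : BddBelow (Set.range g) := ⟨0, by rintro _ ⟨y, rfl⟩; exact hnonneg y⟩
  have hginn : 0 ≤ gi := le_ciInf hnonneg
  have hgix : gi ≤ g x := ciInf_le hbdd x
  -- key: G ≤ 2 L (g x - gi)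
  have key : G ≤ 2 * L * (g x - gi) := by
    rcases eq_or_lt_of_le hL with hL0 | hLpos
    · -- L = 0 : gradient must vanish
      have hzero : gradient g x = 0 := by
        by_contra hne
        have hGpos : 0 < G := by rw [hG]; exact pow_pos (norm_pos_iff.mpr hne) 2
        -- for all t ≥ 0, 0 ≤ g x - t * G
        have hub : ∀ t : ℝ, 0 ≤ t → 0 ≤ g x - t * G := by
          intro t ht
          have := descent_lemma g L hdiff hsmooth x (-(t • gradient g x))
          rw [inner_neg_right, real_inner_smul_right, real_inner_self_eq_norm_sq] at this
          have h2 := hnonneg (x + -(t • gradient g x))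
          rw [← hL0] at this
          simp only [zero_div, zero_mul, add_zero] at this
          nlinarith
        have := hub ((g x + 1) / G) (by positivity)
        rw [div_mul_cancel₀ _ (ne_of_gt hGpos)] at this
        linarith
      simp [hG, hzero]
      nlinarith
    · have := descent_lemma g L hdiff hsmooth x (-((1/L) • gradient g x))
      rw [inner_neg_right, real_inner_smul_right, real_inner_self_eq_norm_sq] at this
      have h2 : gi ≤ g (x + -((1/L) • gradient g x)) := ciInf_le hbdd _
      rw [norm_neg, norm_smul, Real.norm_eq_abs, abs_of_pos (one_div_pos.mpr hLpos)] at this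
      have hL' : L ≠ 0 := ne_of_gt hLpos
      rw [mul_pow, ← hG] at this
      have he : L / 2 * ((1/L) ^ 2 * G) = 1/(2*L) * G := by field_simp
      have he2 : (1/L) * G - 1/(2*L) * G = 1/(2*L) * G := by field_simp; ring
      have h3 : 1/(2*L) * G ≤ g x - gi := by nlinarith
      have h4 := mul_le_mul_of_nonneg_left h3 (by positivity : (0:ℝ) ≤ 2*L)
      have h5 : 2*L*(1/(2*L)*G) = G := by field_simp
      linarith
  -- identity: (σ - γ)/σ = γ * G / (2 * g x)
  have hD : (0:ℝ) < 1 + σ / (2 * g x) * G := by positivity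
  have hγpos : 0 < γ := by rw [hγ]; positivity
  have hid : (σ - γ) / σ = γ * G / (2 * g x) := by
    rw [hγ]
    field_simp
    ring
  rw [hid]
  have h1δ : 0 ≤ 1 - δ := by linarith
  have key2 : (1 - δ) * γ ^ 2 * G ≤ (1 - δ) * γ ^ 2 * (2 * L * (g x - gi)) := by
    apply mul_le_mul_of_nonneg_left key (by positivity)
  have hgx : g x ≠ 0 := ne_of_gt hx
  -- RHS rewrite: 2γδ(γG/(2gx)) gx = δγ²G etc.
  have expand : 2 * γ * (δ * (γ * G / (2 * g x)) + (1 - δ) * L * γ) * (g x - gi)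
      + 2 * γ * δ * (γ * G / (2 * g x)) * gi
      = δ * γ^2 * G + 2 * (1-δ) * L * γ^2 * (g x - gi)
        + δ * γ^2 * G * (-(g x - gi) / g x + -gi/g x + 1) := by
    field_simp
    ring
  rw [expand]
  have : -(g x - gi) / g x + -gi/g x + 1 = 0 := by field_simp; ring
  rw [this, mul_zero, add_zero]
  nlinarith
end

section
/- Let g : ℝ^d → ℝ be non-negative, differentiable, L-smooth and convex, let g* = inf_y g(y), let x, y ∈ ℝ^d with g(x) > 0, let σ > 0, let γ = σ / (1 + (σ/(2 g(x))) ‖∇g(x)‖²) be the NGN stepsize, and set x⁺ = x − γ ∇g(x). Then ‖x⁺ − y‖² − ‖x − y‖² ≤ − T₀ (g(x) − g(y)) + T₁ (g(y) − g*) + T₂ g*, where T₀ = 2σ/((1 + 2σL)(1 + σL)), T₁ = 6Lσ²/(1 + 2σL), and T₂ = (2σ²L/(1 + σL)) · max{0, (2σL − 1)/(2σL + 1)}. -/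
open scoped RealInnerProductSpace


set_option maxHeartbeats 1000000 in
lemma ngn_scalar (s h b f u : ℝ) (hs : 0 < s) (hh : 0 < h) (hf0 : 0 ≤ f)
    (hfh : f ≤ h) (hfb : f ≤ b) (hu1 : 1 ≤ u) (huc : h*u ≤ h + s*(h-f)) :
    (b*u - h)/u^2 ≤ (b-h)/((1+2*s)*(1+s)) + 3*s*(b-f)/(1+2*s)
      + s/(1+s) * max 0 ((2*s-1)/(2*s+1)) * f := by
  have hu0 : (0:ℝ) < u := lt_of_lt_of_le one_pos hu1
  have hb0 : 0 ≤ b := le_trans hf0 hfb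
  have hq0 : 0 ≤ h - f := by linarith
  have hp0 : 0 ≤ b - f := by linarith
  have hD : (0:ℝ) < (1+2*s)*(1+s) := by positivity
  have hsq : 0 ≤ s*(h-f) := mul_nonneg hs.le hq0
  have hHpos : 0 < h + s*(h-f) := by linarith
  rcases le_total (2*s) 1 with hsA | hsB
  · -- case A : max = 0
    have hmax : max 0 ((2*s-1)/(2*s+1)) = 0 :=
      max_eq_left (div_nonpos_of_nonpos_of_nonneg (by linarith) (by linarith))
    rw [hmax]
    simp only [mul_zero, zero_mul, add_zero]
    have hRHS : (b-h)/((1+2*s)*(1+s)) + 3*s*(b-f)/(1+2*s)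
        = ((b-h) + 3*s*(1+s)*(b-f))/((1+2*s)*(1+s)) := by
      field_simp
    rw [hRHS, div_le_div_iff₀ (by positivity) hD]
    set R : ℝ := (b-h) + 3*s*(1+s)*(b-f) with hR
    set H : ℝ := h + s*(h-f) with hHdef
    rcases le_or_gt (b*H) (2*h^2) with hI | hI
    · -- Case I
      have hinner : 0 ≤ h*H + h^2*u - b*H*u := by
        nlinarith [mul_le_mul_of_nonneg_right hI hu0.le, mul_le_mul_of_nonneg_left huc hh.le]
      have key1 : (b*u - h)*H^2 ≤ h*(b*H - h^2)*u^2 := by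
        nlinarith [mul_nonneg (sub_nonneg.2 huc) hinner]
      have c1 : (0:ℝ) ≤ s*(s*h^3*(b-f)) := by
        have := mul_nonneg (mul_nonneg hs.le (pow_nonneg hh.le 3)) hp0
        nlinarith [this]
      have c2 : (0:ℝ) ≤ s*((1+3*s+4*s^2)*(h^2*((h-f)*(b-f)))) :=
        mul_nonneg hs.le (mul_nonneg (by nlinarith [sq_nonneg s]) (mul_nonneg (sq_nonneg h) (mul_nonneg hq0 hp0)))
      have c3 : (0:ℝ) ≤ s*(s*(h*((h-f)^2*(b-f)))) :=
        mul_nonneg hs.le (mul_nonneg hs.le (mul_nonneg hh.le (mul_nonneg (sq_nonneg _) hp0)))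
      have c4 : (0:ℝ) ≤ s*(3*s^2*(1+s)*(h*((b-f)*(h-f)^2))) :=
        mul_nonneg hs.le (mul_nonneg (by positivity) (mul_nonneg hh.le (mul_nonneg hp0 (sq_nonneg _))))
      have hα : (0:ℝ) ≤ 2 - s - 2*s^2 := by nlinarith
      have c5 : (0:ℝ) ≤ s*((2-s-2*s^2)*(h^2*((h-f)*f))) :=
        mul_nonneg hs.le (mul_nonneg hα (mul_nonneg (sq_nonneg h) (mul_nonneg hq0 hf0)))
      have c6 : (0:ℝ) ≤ s*((1+s)*(h^2*(h-f)^2)) := by positivity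
      have c7 : (0:ℝ) ≤ s*(s*(h*((h-f)^2*f))) :=
        mul_nonneg hs.le (mul_nonneg hs.le (mul_nonneg hh.le (mul_nonneg (sq_nonneg _) hf0)))
      have c0 : 0 ≤ h*(R*H^2 - h*(b*H - h^2)*((1+2*s)*(1+s))) := by
        rw [hR, hHdef]; linarith [c1, c2, c3, c4, c5, c6, c7]
      have key2 : h*(b*H - h^2)*((1+2*s)*(1+s)) ≤ R*H^2 := by
        have := (mul_nonneg_iff_of_pos_left hh).mp c0
        linarith
      have k3 : ((b*u - h)*((1+2*s)*(1+s)))*H^2 ≤ (R*u^2)*H^2 := by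
        have A := mul_le_mul_of_nonneg_right key1 hD.le
        have B := mul_le_mul_of_nonneg_right key2 (sq_nonneg u)
        linarith
      exact le_of_mul_le_mul_right k3 (by positivity)
    · rcases le_total b (2*h) with hII | hIII
      · -- Case II
        have key1 : (b*u - h)*(4*h) ≤ b^2*u^2 := by nlinarith [sq_nonneg (b*u - 2*h)]
        have hr0 : (0:ℝ) ≤ 2*h - b := by linarith
        have hr1 : (2*h-b)*H ≤ 2*h*(s*(h-f)) := by rw [hHdef]; nlinarith [hI.le]
        have hr2sq : 2*h - b ≤ 2*(s*(h-f)) := by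
          have h1 : (2*h-b)*h ≤ (2*(s*(h-f)))*h := by
            rw [hHdef] at hr1; nlinarith [mul_nonneg (mul_nonneg hr0 hs.le) hq0]
          exact le_of_mul_le_mul_right h1 hh
        have hrhq : 2*h - b ≤ h + (h-f) := by linarith
        have hA3 : (2*h-b)^2 ≤ 4*(s*(h-f))*h := by
          nlinarith [mul_nonneg (sub_nonneg.2 hr2sq) hr0,
            mul_le_mul_of_nonneg_left hrhq hsq, mul_nonneg hsq (sub_nonneg.2 hfh)]
        have hA4 : s*(2*h-b)^2 ≤ s*(4*(s*(h-f))*h) := mul_le_mul_of_nonneg_left hA3 hs.le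
        have hA5 : s^2*(2*h-b)^2 ≤ s^2*(4*(s*(h-f))*h) := mul_le_mul_of_nonneg_left hA3 (sq_nonneg s)
        have hA6 : (s^2*h)*(2*h-b) ≤ (s^2*h)*(2*(s*(h-f))) :=
          mul_le_mul_of_nonneg_left hr2sq (by positivity)
        have hA7 : (2*s)*(s^2*h*(h-f)) ≤ 1*(s^2*h*(h-f)) :=
          mul_le_mul_of_nonneg_right hsA (mul_nonneg (mul_nonneg (sq_nonneg s) hh.le) hq0)
        have hA8 : (2*s)*(s*h*(h-f)) ≤ 1*(s*h*(h-f)) :=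
          mul_le_mul_of_nonneg_right hsA (mul_nonneg (mul_nonneg hs.le hh.le) hq0)
        have hA9 : s^2*h*(h-f) ≤ s^2*h*h := by
          have := mul_nonneg (mul_nonneg (sq_nonneg s) hh.le) hf0
          linarith
        have key2 : b^2*((1+2*s)*(1+s)) ≤ 4*h*R := by
          rw [hR]
          linarith [hA3, hA4, hA5, hA6, hA7, hA8, hA9,
            mul_nonneg (mul_nonneg hs.le hh.le) hq0, mul_nonneg (mul_nonneg (sq_nonneg s) hh.le) hh.le]
        have k3 : ((b*u - h)*((1+2*s)*(1+s)))*(4*h) ≤ (R*u^2)*(4*h) := by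
          have A := mul_le_mul_of_nonneg_right key1 hD.le
          have B := mul_le_mul_of_nonneg_right key2 (sq_nonneg u)
          linarith
        exact le_of_mul_le_mul_right k3 (by positivity)
      · -- Case III
        have hbu : 0 ≤ b*u - h*(u+1) := by
          have h1 := mul_le_mul_of_nonneg_right hIII hu0.le
          have h2 : 0 ≤ h*(u-1) := mul_nonneg hh.le (by linarith)
          linarith
        have key1 : b*u - h ≤ (b-h)*u^2 := by
          nlinarith [mul_nonneg (sub_nonneg.2 hu1) hbu]
        have key2 : (b-h)*((1+2*s)*(1+s)) ≤ R := by
          rw [hR]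
          have e1 : 0 ≤ (3*s+2*s^2)*(h-f) := mul_nonneg (by positivity) hq0
          have e2 : 0 ≤ s^2*(b-f) := mul_nonneg (sq_nonneg s) hp0
          linarith
        have k3 : ((b*u - h)*((1+2*s)*(1+s)))*1 ≤ (R*u^2)*1 := by
          have A := mul_le_mul_of_nonneg_right key1 hD.le
          have B := mul_le_mul_of_nonneg_right key2 (sq_nonneg u)
          linarith
        exact le_of_mul_le_mul_right k3 one_pos
  · -- case B : 1 ≤ 2s
    have h2s1 : (0:ℝ) < 2*s+1 := by linarith
    have hmax : max 0 ((2*s-1)/(2*s+1)) = (2*s-1)/(2*s+1) :=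
      max_eq_right (div_nonneg (by linarith) h2s1.le)
    rw [hmax]
    have hRHS : (b-h)/((1+2*s)*(1+s)) + 3*s*(b-f)/(1+2*s) + s/(1+s)*((2*s-1)/(2*s+1))*f
        = ((b-h) + 3*s*(1+s)*(b-f) + s*(2*s-1)*f)/((1+2*s)*(1+s)) := by
      field_simp; ring
    rw [hRHS, div_le_div_iff₀ (by positivity) hD]
    set R : ℝ := (b-h) + 3*s*(1+s)*(b-f) + s*(2*s-1)*f with hR
    set H : ℝ := h + s*(h-f) with hHdef
    rcases le_or_gt (b*H) (2*h^2) with hI | hI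
    · -- Case I
      have hinner : 0 ≤ h*H + h^2*u - b*H*u := by
        nlinarith [mul_le_mul_of_nonneg_right hI hu0.le, mul_le_mul_of_nonneg_left huc hh.le]
      have key1 : (b*u - h)*H^2 ≤ h*(b*H - h^2)*u^2 := by
        nlinarith [mul_nonneg (sub_nonneg.2 huc) hinner]
      have c1 : (0:ℝ) ≤ s*(s*h^3*(b-f)) := by
        have := mul_nonneg (mul_nonneg hs.le (pow_nonneg hh.le 3)) hp0
        nlinarith [this]
      have c2 : (0:ℝ) ≤ s*((1+3*s+4*s^2)*(h^2*((h-f)*(b-f)))) :=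
        mul_nonneg hs.le (mul_nonneg (by nlinarith [sq_nonneg s]) (mul_nonneg (sq_nonneg h) (mul_nonneg hq0 hp0)))
      have c3 : (0:ℝ) ≤ s*(s*(h*((h-f)^2*(b-f)))) :=
        mul_nonneg hs.le (mul_nonneg hs.le (mul_nonneg hh.le (mul_nonneg (sq_nonneg _) hp0)))
      have c4 : (0:ℝ) ≤ s*(3*s^2*(1+s)*(h*((b-f)*(h-f)^2))) :=
        mul_nonneg hs.le (mul_nonneg (by positivity) (mul_nonneg hh.le (mul_nonneg hp0 (sq_nonneg _))))
      have c6 : (0:ℝ) ≤ s*((1+s)*(h^2*(h-f)^2)) := by positivity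
      have c7 : (0:ℝ) ≤ s*(s*(h*((h-f)^2*f))) :=
        mul_nonneg hs.le (mul_nonneg hs.le (mul_nonneg hh.le (mul_nonneg (sq_nonneg _) hf0)))
      have c8 : (0:ℝ) ≤ s*((2*s-1)*(f*h^3)) :=
        mul_nonneg hs.le (mul_nonneg (by linarith) (mul_nonneg hf0 (pow_nonneg hh.le 3)))
      have c9 : (0:ℝ) ≤ s*((2*s^2-3*s+2)*(h^2*((h-f)*f))) :=
        mul_nonneg hs.le (mul_nonneg (by nlinarith [sq_nonneg (4*s-3)]) (mul_nonneg (sq_nonneg h) (mul_nonneg hq0 hf0)))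
      have c10 : (0:ℝ) ≤ s*((2*s-1)*(s^2*(f*(h*(h-f)^2)))) :=
        mul_nonneg hs.le (mul_nonneg (by linarith) (mul_nonneg (sq_nonneg s) (mul_nonneg hf0 (mul_nonneg hh.le (sq_nonneg _)))))
      have c0 : 0 ≤ h*(R*H^2 - h*(b*H - h^2)*((1+2*s)*(1+s))) := by
        rw [hR, hHdef]; linarith [c1, c2, c3, c4, c6, c7, c8, c9, c10]
      have key2 : h*(b*H - h^2)*((1+2*s)*(1+s)) ≤ R*H^2 := by
        have := (mul_nonneg_iff_of_pos_left hh).mp c0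
        linarith
      have k3 : ((b*u - h)*((1+2*s)*(1+s)))*H^2 ≤ (R*u^2)*H^2 := by
        have A := mul_le_mul_of_nonneg_right key1 hD.le
        have B := mul_le_mul_of_nonneg_right key2 (sq_nonneg u)
        linarith
      exact le_of_mul_le_mul_right k3 (by positivity)
    · rcases le_total b (2*h) with hII | hIII
      · -- Case II-B
        have key1 : (b*u - h)*(4*h) ≤ b^2*u^2 := by nlinarith [sq_nonneg (b*u - 2*h)]
        have hr0 : (0:ℝ) ≤ 2*h - b := by linarith
        have hr1 : (2*h-b)*H ≤ 2*h*(s*(h-f)) := by rw [hHdef]; nlinarith [hI.le]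
        have hrhq : 2*h - b ≤ h + (h-f) := by linarith
        have key2 : b^2*((1+2*s)*(1+s)) ≤ 4*h*R := by
          rcases le_total (h*h + (h-f)*h) (s*(h-f)*f) with hreg | hreg
          · -- regime beta'
            have hT : 0 ≤ (6*s^2-7*s-1)*h^2 + (-4*s^2+10*s-2)*h*(h-f) - (2*s^2+3*s+1)*(h-f)^2 := by
              nlinarith [mul_nonneg (sub_nonneg.2 hreg) (mul_pos hh hh).le,
                mul_nonneg (sub_nonneg.2 hreg) (mul_nonneg hq0 hq0),
                mul_nonneg (sub_nonneg.2 hreg) (mul_nonneg hq0 hh.le),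
                sq_nonneg (h-(h-f)), sq_nonneg (h+(h-f)),
                mul_nonneg hq0 (sub_nonneg.2 (by linarith : h-f ≤ h)),
                mul_nonneg (sub_nonneg.2 hreg) (sub_nonneg.2 hreg),
                mul_nonneg (mul_nonneg hq0 hq0) (sub_nonneg.2 (by linarith : h-f ≤ h))]
            have hrr : (2*h-b)^2 ≤ (h+(h-f))^2 := pow_le_pow_left₀ hr0 hrhq 2
            have hDr2 := mul_le_mul_of_nonneg_left hrr hD.le
            have hhr : (4*s^2*h)*(2*h-b) ≤ (4*s^2*h)*(h+(h-f)) :=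
              mul_le_mul_of_nonneg_left hrhq (by positivity)
            rw [hR]; linarith [hT, hDr2, hhr]
          · -- regime alpha'
            have hC : 0 ≤ h*h + (h-f)*h - s*(h-f)*f := by linarith
            have z1 : (0:ℝ) ≤ (2*s-1)*h^4 := mul_nonneg (by linarith) (by positivity)
            have z2 : (0:ℝ) ≤ s*h^4 := by positivity
            have z3 : (0:ℝ) ≤ (3*s-2)^2*(h^3*(h-f)) :=
              mul_nonneg (sq_nonneg _) (mul_nonneg (by positivity) hq0)
            have z4 : (0:ℝ) ≤ h^3*(h-f) := mul_nonneg (by positivity) hq0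
            have z5 : (0:ℝ) ≤ s*(h^2*(h-f)^2) := by positivity
            have z6 : (0:ℝ) ≤ s^2*(h*(h-f)^3) :=
              mul_nonneg (sq_nonneg s) (mul_nonneg hh.le (pow_nonneg hq0 3))
            have z7 : (0:ℝ) ≤ (h*h + (h-f)*h - s*(h-f)*f) * (s^2*((h-f)*h)) :=
              mul_nonneg hC (mul_nonneg (sq_nonneg s) (mul_nonneg hq0 hh.le))
            have z8 : (0:ℝ) ≤ (h*h + (h-f)*h - s*(h-f)*f) * (s*((h-f)*h)) :=
              mul_nonneg hC (mul_nonneg hs.le (mul_nonneg hq0 hh.le))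
            have hZ : 0 ≤ (h^2*(3*s-1)+s*h*(h-f)+4*h*(h-f))*(h+s*(h-f))^2
                - (2*s+1)*(s+1)*s*h^2*(h-f)^2 - 2*s^2*h^2*(h-f)*(h+s*(h-f)) := by
              linarith [z1, z2, z3, z4, z5, z6, z7, z8]
            have hZ4 : 0 ≤ (4*s)*((h^2*(3*s-1)+s*h*(h-f)+4*h*(h-f))*(h+s*(h-f))^2
                - (2*s+1)*(s+1)*s*h^2*(h-f)^2 - 2*s^2*h^2*(h-f)*(h+s*(h-f))) :=
              mul_nonneg (by positivity) hZ
            have h1 : ((2*h-b)*H)^2 ≤ (2*h*(s*(h-f)))^2 :=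
              pow_le_pow_left₀ (mul_nonneg hr0 hHpos.le) hr1 2
            have h1D := mul_le_mul_of_nonneg_left h1 hD.le
            have h2 : (4*s^2*h*H)*((2*h-b)*H) ≤ (4*s^2*h*H)*(2*h*(s*(h-f))) :=
              mul_le_mul_of_nonneg_left hr1 (by positivity)
            have hWmul : 0 ≤ (4*h*R - b^2*((1+2*s)*(1+s))) * H^2 := by
              rw [hR, hHdef]; rw [hHdef] at h1D h2
              linarith [hZ4, h1D, h2]
            have := (mul_nonneg_iff_of_pos_right (by positivity : (0:ℝ) < H^2)).mp hWmul
            linarith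
        have k3 : ((b*u - h)*((1+2*s)*(1+s)))*(4*h) ≤ (R*u^2)*(4*h) := by
          have A := mul_le_mul_of_nonneg_right key1 hD.le
          have B := mul_le_mul_of_nonneg_right key2 (sq_nonneg u)
          linarith
        exact le_of_mul_le_mul_right k3 (by positivity)
      · -- Case III
        have hbu : 0 ≤ b*u - h*(u+1) := by
          have h1 := mul_le_mul_of_nonneg_right hIII hu0.le
          have h2 : 0 ≤ h*(u-1) := mul_nonneg hh.le (by linarith)
          linarith
        have key1 : b*u - h ≤ (b-h)*u^2 := by
          nlinarith [mul_nonneg (sub_nonneg.2 hu1) hbu]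
        have key2 : (b-h)*((1+2*s)*(1+s)) ≤ R := by
          rw [hR]
          have e1 : 0 ≤ (3*s+2*s^2)*(h-f) := mul_nonneg (by positivity) hq0
          have e2 : 0 ≤ s^2*(b-f) := mul_nonneg (sq_nonneg s) hp0
          have e3 : 0 ≤ s*(2*s-1)*f := mul_nonneg (mul_nonneg hs.le (by linarith)) hf0
          linarith
        have k3 : ((b*u - h)*((1+2*s)*(1+s)))*1 ≤ (R*u^2)*1 := by
          have A := mul_le_mul_of_nonneg_right key1 hD.le
          have B := mul_le_mul_of_nonneg_right key2 (sq_nonneg u)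
          linarith
        exact le_of_mul_le_mul_right k3 one_pos

open scoped RealInnerProductSpace

variable {d : ℕ}

lemma ngn_line_deriv (g : EuclideanSpace ℝ (Fin d) → ℝ) (hdiff : Differentiable ℝ g)
    (x v : EuclideanSpace ℝ (Fin d)) (t : ℝ) :
    HasDerivAt (fun t : ℝ => g (x + t • v)) ⟪gradient g (x + t • v), v⟫ t := by
  have hc : HasDerivAt (fun t : ℝ => x + t • v) v t := by
    simpa using ((hasDerivAt_id t).smul_const v).const_add x
  have hg := (hdiff (x + t • v)).hasGradientAt
  have hg' := hasGradientAt_iff_hasFDerivAt.mp hg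
  have := hg'.comp_hasDerivAt t hc
  simpa [InnerProductSpace.toDual_apply_apply, Function.comp_def] using this

lemma ngn_convex_ineq (g : EuclideanSpace ℝ (Fin d) → ℝ) (hdiff : Differentiable ℝ g)
    (hconv : ConvexOn ℝ Set.univ g) (x y : EuclideanSpace ℝ (Fin d)) :
    g x + ⟪gradient g x, y - x⟫ ≤ g y := by
  have hline := ngn_line_deriv g hdiff x (y - x) 0
  simp only [zero_smul, add_zero] at hline
  have hφconv : ConvexOn ℝ Set.univ (fun t : ℝ => g (x + t • (y - x))) := by
    have h1 := hconv.comp_affineMap (AffineMap.lineMap x y)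
    simp only [Set.preimage_univ] at h1
    have h2 : (g ∘ ⇑(AffineMap.lineMap x y)) = fun t : ℝ => g (x + t • (y - x)) := by
      funext t
      simp only [Function.comp_apply, AffineMap.lineMap_apply, vsub_eq_sub, vadd_eq_add]
      congr 1
      module
    rw [h2] at h1
    exact h1
  have hslope := hφconv.le_slope_of_hasDerivWithinAt (Set.mem_univ (0:ℝ)) (Set.mem_univ (1:ℝ))
    one_pos hline.hasDerivWithinAt
  rw [slope_def_field] at hslope
  simp only [one_smul, zero_smul, add_zero, sub_zero, div_one] at hslope
  have h1 : x + (y - x) = y := by module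
  rw [h1] at hslope
  linarith

lemma ngn_descent (g : EuclideanSpace ℝ (Fin d) → ℝ) (L : ℝ) (hL : 0 < L)
    (hdiff : Differentiable ℝ g)
    (hsmooth : ∀ x y, ‖gradient g x - gradient g y‖ ≤ L * ‖x - y‖)
    (x v : EuclideanSpace ℝ (Fin d)) :
    g (x + v) ≤ g x + ⟪gradient g x, v⟫ + L/2 * ‖v‖^2 := by
  set χ : ℝ → ℝ := fun t => g (x + t • v) - t * ⟪gradient g x, v⟫ - L * ‖v‖^2 * t^2/2 with hχ
  have hd : ∀ t : ℝ, HasDerivAt χ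
      (⟪gradient g (x + t • v), v⟫ - ⟪gradient g x, v⟫ - L * ‖v‖^2 * t) t := by
    intro t
    have h1 := ngn_line_deriv g hdiff x v t
    have h2 : HasDerivAt (fun t : ℝ => t * ⟪gradient g x, v⟫) ⟪gradient g x, v⟫ t := by
      simpa using (hasDerivAt_id t).mul_const ⟪gradient g x, v⟫
    have h3 : HasDerivAt (fun t : ℝ => L * ‖v‖^2 * t^2/2) (L * ‖v‖^2 * t) t := by
      have := (hasDerivAt_pow 2 t).const_mul (L * ‖v‖^2/2)
      have e : (fun t : ℝ => L * ‖v‖^2 * t^2/2) = fun y => L * ‖v‖^2/2 * y^2 := by ext y; ring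
      rw [e]
      exact this.congr_deriv (by rw [show (2:ℕ) - 1 = 1 from rfl, pow_one]; push_cast; ring)
    exact (h1.sub h2).sub h3
  have hanti : AntitoneOn χ (Set.Icc (0:ℝ) 1) := by
    apply antitoneOn_of_deriv_nonpos (convex_Icc 0 1)
    · exact fun t _ => (hd t).differentiableAt.continuousAt.continuousWithinAt
    · exact fun t _ => (hd t).differentiableAt.differentiableWithinAt
    · intro t ht
      rw [interior_Icc] at ht
      rw [(hd t).deriv]
      have hsm := hsmooth (x + t • v) x
      have hxv : x + t • v - x = t • v := by module
      rw [hxv, norm_smul] at hsm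
      have hib : ⟪gradient g (x + t • v) - gradient g x, v⟫ ≤
          ‖gradient g (x + t • v) - gradient g x‖ * ‖v‖ := real_inner_le_norm _ _
      rw [inner_sub_left] at hib
      have habs : ‖t‖ = t := by rw [Real.norm_eq_abs]; exact abs_of_pos ht.1
      rw [habs] at hsm
      have h5 : ‖gradient g (x + t • v) - gradient g x‖ * ‖v‖ ≤ L * (t * ‖v‖) * ‖v‖ :=
        mul_le_mul_of_nonneg_right hsm (norm_nonneg v)
      nlinarith [norm_nonneg v]
  have h01 := hanti (Set.mem_Icc.2 ⟨le_refl 0, zero_le_one⟩) (Set.mem_Icc.2 ⟨zero_le_one, le_refl 1⟩) zero_le_one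
  have e0 : χ 0 = g x := by
    simp only [hχ]; rw [zero_smul, add_zero]; ring
  have e1 : χ 1 = g (x + v) - ⟪gradient g x, v⟫ - L * ‖v‖^2/2 := by
    simp only [hχ]; rw [one_smul]; ring
  rw [e0, e1] at h01
  linarith

lemma ngn_grad_bound (g : EuclideanSpace ℝ (Fin d) → ℝ) (L : ℝ) (hL : 0 < L)
    (hdiff : Differentiable ℝ g) (hnonneg : ∀ z, 0 ≤ g z)
    (hsmooth : ∀ x y, ‖gradient g x - gradient g y‖ ≤ L * ‖x - y‖)
    (z : EuclideanSpace ℝ (Fin d)) :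
    ‖gradient g z‖^2 ≤ 2*L*(g z - ⨅ w, g w) := by
  have hbdd : BddBelow (Set.range g) := ⟨0, by rintro _ ⟨w, rfl⟩; exact hnonneg w⟩
  have hinf_le : (⨅ w, g w) ≤ g (z + (-(L⁻¹)) • gradient g z) := ciInf_le hbdd _
  have hdesc := ngn_descent g L hL hdiff hsmooth z ((-(L⁻¹)) • gradient g z)
  rw [real_inner_smul_right, real_inner_self_eq_norm_sq, norm_smul] at hdesc
  have habs : ‖(-(L⁻¹) : ℝ)‖ = L⁻¹ := by
    rw [Real.norm_eq_abs, abs_neg, abs_of_pos (inv_pos.2 hL)]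
  rw [habs, mul_pow] at hdesc
  have hLne : L ≠ 0 := ne_of_gt hL
  have hkey : g (z + (-(L⁻¹)) • gradient g z) ≤ g z - ‖gradient g z‖^2/(2*L) := by
    have : -(L⁻¹) * ‖gradient g z‖^2 + L/2 * ((L⁻¹)^2 * ‖gradient g z‖^2)
        = -(‖gradient g z‖^2/(2*L)) := by field_simp; ring
    linarith [hdesc, this.symm.le]
  have := le_trans hinf_le hkey
  have h2L : (0:ℝ) < 2*L := by linarith
  have h3 : ‖gradient g z‖^2/(2*L) ≤ g z - ⨅ w, g w := by linarith
  have h4 := (div_le_iff₀ h2L).mp h3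
  linarith

/-- One-step distance decrease of the NGN update: with
`x⁺ = x − γ ∇g(x)` (NGN stepsize `γ`), for any `y`,
`‖x⁺ − y‖² − ‖x − y‖² ≤ −T₀ (g(x) − g(y)) + T₁ (g(y) − g*) + T₂ g*`, where
`T₀ = 2σ/((1+2σL)(1+σL))`, `T₁ = 6Lσ²/(1+2σL)`,
`T₂ = (2σ²L/(1+σL)) max{0, (2σL−1)/(2σL+1)}`. -/
theorem ngn_one_step_inequality {d : ℕ} (g : EuclideanSpace ℝ (Fin d) → ℝ)
    (L σ γ : ℝ) (hL : 0 < L) (hσ : 0 < σ)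
    (hdiff : Differentiable ℝ g)
    (hnonneg : ∀ z, 0 ≤ g z)
    (hsmooth : ∀ x y, ‖gradient g x - gradient g y‖ ≤ L * ‖x - y‖)
    (hconv : ConvexOn ℝ Set.univ g)
    (x y : EuclideanSpace ℝ (Fin d)) (hx : 0 < g x)
    (hγ : γ = σ / (1 + σ / (2 * g x) * ‖gradient g x‖ ^ 2)) :
    ‖x - γ • gradient g x - y‖ ^ 2 - ‖x - y‖ ^ 2 ≤
      -(2 * σ / ((1 + 2 * σ * L) * (1 + σ * L))) * (g x - g y)
        + 6 * L * σ ^ 2 / (1 + 2 * σ * L) * (g y - ⨅ z, g z)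
        + 2 * σ ^ 2 * L / (1 + σ * L) * max 0 ((2 * σ * L - 1) / (2 * σ * L + 1))
          * (⨅ z, g z) := by
  have hbdd : BddBelow (Set.range g) := ⟨0, by rintro _ ⟨w, rfl⟩; exact hnonneg w⟩
  have hfh : (⨅ z, g z) ≤ g x := ciInf_le hbdd x
  have hfb : (⨅ z, g z) ≤ g y := ciInf_le hbdd y
  have hf0 : (0:ℝ) ≤ ⨅ z, g z := le_ciInf fun w => hnonneg w
  set u : ℝ := 1 + σ / (2 * g x) * ‖gradient g x‖ ^ 2 with hu
  have hupos : (0:ℝ) ≤ σ / (2 * g x) * ‖gradient g x‖ ^ 2 := by positivity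
  have hu1 : 1 ≤ u := by rw [hu]; linarith
  have hu0 : (0:ℝ) < u := lt_of_lt_of_le one_pos hu1
  have hγu : γ = σ / u := by rw [hγ]
  have hγ0 : 0 ≤ γ := by rw [hγu]; positivity
  have hgb := ngn_grad_bound g L hL hdiff hnonneg hsmooth x
  have hxne : g x ≠ 0 := ne_of_gt hx
  have hexpu : (g x) * u = g x + σ * ‖gradient g x‖ ^ 2 / 2 := by
    rw [hu]; field_simp
  have huc : (g x) * u ≤ g x + (σ * L) * (g x - ⨅ z, g z) := by
    rw [hexpu]
    have := mul_le_mul_of_nonneg_left hgb (by positivity : (0:ℝ) ≤ σ/2)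
    linarith
  have hscal := ngn_scalar (σ*L) (g x) (g y) (⨅ z, g z) u (mul_pos hσ hL) hx hf0 hfh hfb hu1 huc
  rw [show (2:ℝ)*(σ*L) = 2*σ*L from by ring] at hscal
  -- expansion of the squared norm
  have h1 : x - γ • gradient g x - y = (x - y) - γ • gradient g x := sub_right_comm _ _ _
  have hexpand : ‖x - γ • gradient g x - y‖ ^ 2 - ‖x - y‖ ^ 2
      = -(2*γ*⟪gradient g x, x - y⟫) + γ^2*‖gradient g x‖^2 := by
    rw [h1, norm_sub_sq_real, real_inner_smul_right, norm_smul, Real.norm_eq_abs, mul_pow, sq_abs,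
      real_inner_comm]
    ring
  have hcv := ngn_convex_ineq g hdiff hconv x y
  have hcv' : g x - g y ≤ ⟪gradient g x, x - y⟫ := by
    have h2 : ⟪gradient g x, y - x⟫ = -⟪gradient g x, x - y⟫ := by
      rw [← inner_neg_right]; congr 1; abel
    linarith [hcv, h2.le, h2.ge]
  have step1 : ‖x - γ • gradient g x - y‖ ^ 2 - ‖x - y‖ ^ 2
      ≤ -(2*γ*(g x - g y)) + γ^2*‖gradient g x‖^2 := by
    rw [hexpand]
    have := mul_le_mul_of_nonneg_left hcv' (by linarith : (0:ℝ) ≤ 2*γ)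
    linarith
  have hNid : ‖gradient g x‖ ^ 2 = (u - 1)*(2*(g x))/σ := by
    rw [hu]; field_simp; ring
  have hid : -(2*γ*(g x - g y)) + γ^2*‖gradient g x‖^2 = 2*σ*((g y * u - g x)/u^2) := by
    rw [hγu, hNid]; field_simp; ring
  have step2 : 2*σ*((g y * u - g x)/u^2) ≤ 2*σ*((g y - g x)/((1+2*σ*L)*(1+σ*L))
      + 3*(σ*L)*(g y - ⨅ z, g z)/(1+2*σ*L)
      + (σ*L)/(1+σ*L) * max 0 ((2*σ*L-1)/(2*σ*L+1)) * (⨅ z, g z)) :=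
    mul_le_mul_of_nonneg_left hscal (by positivity)
  have hfinal : 2*σ*((g y - g x)/((1+2*σ*L)*(1+σ*L))
      + 3*(σ*L)*(g y - ⨅ z, g z)/(1+2*σ*L)
      + (σ*L)/(1+σ*L) * max 0 ((2*σ*L-1)/(2*σ*L+1)) * (⨅ z, g z))
      = -(2 * σ / ((1 + 2 * σ * L) * (1 + σ * L))) * (g x - g y)
        + 6 * L * σ ^ 2 / (1 + 2 * σ * L) * (g y - ⨅ z, g z)
        + 2 * σ ^ 2 * L / (1 + σ * L) * max 0 ((2 * σ * L - 1) / (2 * σ * L + 1))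
          * (⨅ z, g z) := by
    have hd1 : (1:ℝ) + 2*σ*L ≠ 0 := by positivity
    have hd2 : (1:ℝ) + σ*L ≠ 0 := by positivity
    field_simp
    ring
  linarith [step1, hid.le, hid.ge, step2, hfinal.le, hfinal.ge]
end

section
/- Let f = (1/N) Σ_{i=1}^N f_i where each f_i : ℝ^d → ℝ is non-negative, differentiable, L-smooth and convex, with f_i(x) > 0 for all i and x, and assume in addition that f is μ-strongly convex with minimizer x*. Let σ > 0, ρ = σ/((1 + 2σL)(1 + σL)), and for x ∈ ℝ^d and each i let γ_i(x) = σ / (1 + (σ/(2 f_i(x))) ‖∇f_i(x)‖²). Then for every x ∈ ℝ^d, (1/N) Σ_{i=1}^N ‖x − γ_i(x) ∇f_i(x) − x*‖² ≤ (1 − μρ) ‖x − x*‖² + (6Lσ²/(1 + 2σL)) Δ_int + (2σ²L/(1 + σL)) · max{0, (2σL − 1)/(2σL + 1)} · Δ_pos. -/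
open scoped RealInnerProductSpace


private lemma scalar1 (a u s m : ℝ) (ha : 0 < a) (ha2 : 2*a ≤ 1) (hu : 0 ≤ u) (hus : u ≤ 2*a*s)
    (hm : 0 ≤ m) (hs : 0 ≤ s) :
    2*(1+a)*(1+2*a)*(s+m)*u*m + 4*s*(s+m)*u + s*u^2 ≤ 4*s*(s+m)^2*a*(3+2*a) := by
  have hF : (0:ℝ) ≤ s + m := by linarith
  have hK : (0:ℝ) ≤ 2*(1+a)*(1+2*a) := by nlinarith
  have B1 : 2*(1+a)*(1+2*a)*(s+m)*u*m ≤ 2*(1+a)*(1+2*a)*(s+m)*(2*a*s)*m := by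
    have := mul_le_mul_of_nonneg_right (mul_le_mul_of_nonneg_left hus (mul_nonneg hK hF)) hm
    linarith [this]
  have B2 : 4*s*(s+m)*u ≤ 4*s*(s+m)*(2*a*s) :=
    mul_le_mul_of_nonneg_left hus (by positivity)
  have B3 : s*u^2 ≤ s*(2*a*s)^2 := by
    have : u^2 ≤ (2*a*s)^2 := by nlinarith
    exact mul_le_mul_of_nonneg_left this hs
  have final : 2*(1+a)*(1+2*a)*(s+m)*(2*a*s)*m + 4*s*(s+m)*(2*a*s) + s*(2*a*s)^2
      ≤ 4*s*(s+m)^2*a*(3+2*a) := by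
    nlinarith [mul_nonneg (mul_nonneg ha.le hs) (mul_nonneg hs hm),
      mul_nonneg (mul_nonneg ha.le hs) (mul_nonneg hm hm),
      mul_nonneg (mul_nonneg ha.le hs) (mul_nonneg hs hs),
      mul_nonneg (mul_nonneg (mul_nonneg ha.le ha.le) hs) (mul_nonneg hs hm),
      mul_nonneg (mul_nonneg (mul_nonneg ha.le ha.le) hs) (mul_nonneg hm hm),
      mul_nonneg (mul_nonneg (mul_nonneg ha.le ha.le) hs) (mul_nonneg hs hs)]
  linarith

private lemma scalar2 (a u s m : ℝ) (ha : 0 < a) (ha2 : 1 ≤ 2*a) (hu : 0 ≤ u) (hus : u ≤ 2*a*s)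
    (hm : 0 ≤ m) (hs : 0 ≤ s) :
    2*(1+a)*(1+2*a)*(s+m)*u*m + 4*s*(s+m)*u + s*u^2
      ≤ 4*s*(s+m)^2*a*(3+2*a) + a*(2*a-1)*m*(2*(s+m)+u)^2 := by
  have hF : (0:ℝ) ≤ s + m := by linarith
  have hc : (0:ℝ) ≤ 2*a - 1 := by linarith
  have B0 : 2*(1+a)*(1+2*a)*(s+m)*u*m
      ≤ 4*a*(2*a-1)*((s+m)*u*m) + (2+10*a)*((s+m)*u*m) := by
    nlinarith [mul_nonneg (mul_nonneg hF hu) hm, sq_nonneg a]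
  have B1 : (2+10*a)*((s+m)*u*m) ≤ (2+10*a)*((s+m)*(2*a*s)*m) := by
    have h2 : (s+m)*u*m ≤ (s+m)*(2*a*s)*m :=
      mul_le_mul_of_nonneg_right (mul_le_mul_of_nonneg_left hus hF) hm
    have : (0:ℝ) ≤ 2+10*a := by linarith
    exact mul_le_mul_of_nonneg_left h2 this
  have B2 : 4*s*(s+m)*u ≤ 4*s*(s+m)*(2*a*s) :=
    mul_le_mul_of_nonneg_left hus (by positivity)
  have B3 : s*u^2 ≤ s*(2*a*s)^2 := by
    have : u^2 ≤ (2*a*s)^2 := by nlinarith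
    exact mul_le_mul_of_nonneg_left this hs
  have Bextra : 4*a*(2*a-1)*((s+m)*u*m) + a*(2*a-1)*m*(2*(s+m))^2
      ≤ a*(2*a-1)*m*(2*(s+m)+u)^2 := by
    nlinarith [mul_nonneg (mul_nonneg (mul_nonneg ha.le hc) hm) (sq_nonneg u)]
  have final : (2+10*a)*((s+m)*(2*a*s)*m) + 4*s*(s+m)*(2*a*s) + s*(2*a*s)^2
      ≤ 4*s*(s+m)^2*a*(3+2*a) + a*(2*a-1)*m*(2*(s+m))^2 := by
    nlinarith [mul_nonneg (mul_nonneg ha.le hs) (mul_nonneg hs hm),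
      mul_nonneg (mul_nonneg ha.le hs) (mul_nonneg hm hm),
      mul_nonneg (mul_nonneg ha.le hs) (mul_nonneg hs hs),
      mul_nonneg (mul_nonneg (mul_nonneg ha.le ha.le) hs) (mul_nonneg hs hm),
      mul_nonneg (mul_nonneg (mul_nonneg ha.le ha.le) hs) (mul_nonneg hm hm),
      mul_nonneg (mul_nonneg (mul_nonneg ha.le ha.le) hs) (mul_nonneg hs hs),
      mul_nonneg (mul_nonneg (mul_nonneg ha.le ha.le) hm) (mul_nonneg hm hm),
      mul_nonneg (mul_nonneg ha.le hm) (mul_nonneg hm hm)]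
  linarith

private lemma core (L σ t s m : ℝ) (hL : 0 < L) (hσ : 0 < σ) (ht : 0 ≤ t)
    (hts : t ≤ 2*L*s) (hm : 0 ≤ m) (hs : 0 ≤ s) (hF : 0 < s + m) :
    (σ/(1+σ/(2*(s+m))*t))^2*t - 2*(σ/(1+σ/(2*(s+m))*t))*s
        + 2*(σ/((1+2*σ*L)*(1+σ*L)))*s
      ≤ 2*σ^2*L/(1+σ*L)*max 0 ((2*σ*L-1)/(2*σ*L+1))*m := by
  have ha : 0 < σ*L := mul_pos hσ hL
  have hD : 0 < 2*(s+m)+σ*t := by nlinarith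
  have hden : 0 < 1+σ/(2*(s+m))*t := by positivity
  have hK : (0:ℝ) < (1+2*σ*L)*(1+σ*L) := by positivity
  have hγ : σ/(1+σ/(2*(s+m))*t) = 2*σ*(s+m)/(2*(s+m)+σ*t) := by
    rw [div_eq_div_iff hden.ne' hD.ne']
    field_simp
  rw [hγ]
  rcases le_total (2*(σ*L)) 1 with h1 | h1
  · have hmax : max 0 ((2*σ*L-1)/(2*σ*L+1)) = 0 := by
      apply max_eq_left
      exact div_nonpos_of_nonpos_of_nonneg (by linarith) (by linarith)
    rw [hmax]
    have hpoly := scalar1 (σ*L) (σ*t) s m ha h1 (by positivity) (by nlinarith) hm hs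
    have key : (2*σ*(s+m)/(2*(s+m)+σ*t))^2*t - 2*(2*σ*(s+m)/(2*(s+m)+σ*t))*s
          + 2*(σ/((1+2*σ*L)*(1+σ*L)))*s
        = 2*σ*((2*(1+σ*L)*(1+2*σ*L)*(s+m)*(σ*t)*m + 4*s*(s+m)*(σ*t) + s*(σ*t)^2)
            - 4*s*(s+m)^2*(σ*L)*(3+2*(σ*L)))/((2*(s+m)+σ*t)^2*((1+2*σ*L)*(1+σ*L))) := by
      field_simp
      ring
    have hnum : 2*σ*((2*(1+σ*L)*(1+2*σ*L)*(s+m)*(σ*t)*m + 4*s*(s+m)*(σ*t) + s*(σ*t)^2)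
            - 4*s*(s+m)^2*(σ*L)*(3+2*(σ*L))) ≤ 0 :=
      mul_nonpos_iff.mpr (Or.inl ⟨by linarith, by linarith⟩)
    have hdd : (0:ℝ) < (2*(s+m)+σ*t)^2*((1+2*σ*L)*(1+σ*L)) := by positivity
    have hle : (2*σ*(s+m)/(2*(s+m)+σ*t))^2*t - 2*(2*σ*(s+m)/(2*(s+m)+σ*t))*s
          + 2*(σ/((1+2*σ*L)*(1+σ*L)))*s ≤ 0 := by
      rw [key]
      exact div_nonpos_of_nonpos_of_nonneg hnum hdd.le
    have : 2*σ^2*L/(1+σ*L)*0*m = 0 := by ring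
    linarith
  · have hmax : max 0 ((2*σ*L-1)/(2*σ*L+1)) = (2*σ*L-1)/(2*σ*L+1) := by
      exact max_eq_right (div_nonneg (by linarith) (by linarith))
    rw [hmax]
    have hpoly := scalar2 (σ*L) (σ*t) s m ha h1 (by positivity) (by nlinarith) hm hs
    have key : 2*σ^2*L/(1+σ*L)*((2*σ*L-1)/(2*σ*L+1))*m
          - ((2*σ*(s+m)/(2*(s+m)+σ*t))^2*t - 2*(2*σ*(s+m)/(2*(s+m)+σ*t))*s
            + 2*(σ/((1+2*σ*L)*(1+σ*L)))*s)
        = 2*σ*((4*s*(s+m)^2*(σ*L)*(3+2*(σ*L)) + (σ*L)*(2*(σ*L)-1)*m*(2*(s+m)+σ*t)^2)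
            - (2*(1+σ*L)*(1+2*σ*L)*(s+m)*(σ*t)*m + 4*s*(s+m)*(σ*t) + s*(σ*t)^2))
          /((2*(s+m)+σ*t)^2*((1+2*σ*L)*(1+σ*L))) := by
      field_simp
      ring
    have hnum : 0 ≤ 2*σ*((4*s*(s+m)^2*(σ*L)*(3+2*(σ*L)) + (σ*L)*(2*(σ*L)-1)*m*(2*(s+m)+σ*t)^2)
            - (2*(1+σ*L)*(1+2*σ*L)*(s+m)*(σ*t)*m + 4*s*(s+m)*(σ*t) + s*(σ*t)^2)) :=
      mul_nonneg (by linarith) (by linarith)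
    have hdd : (0:ℝ) < (2*(s+m)+σ*t)^2*((1+2*σ*L)*(1+σ*L)) := by positivity
    rw [← sub_nonneg, key]
    exact div_nonneg hnum hdd.le



variable {d : ℕ}

private lemma grad_inner (f : EuclideanSpace ℝ (Fin d) → ℝ) (hf : Differentiable ℝ f)
    (p v : EuclideanSpace ℝ (Fin d)) : ⟪gradient f p, v⟫ = fderiv ℝ f p v := by
  rw [gradient]
  exact InnerProductSpace.toDual_symm_apply

private lemma line_deriv (f : EuclideanSpace ℝ (Fin d) → ℝ) (hf : Differentiable ℝ f)
    (z v : EuclideanSpace ℝ (Fin d)) (τ : ℝ) :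
    HasDerivAt (fun θ : ℝ => f (z + θ • v)) ⟪gradient f (z + τ • v), v⟫ τ := by
  have hline : HasDerivAt (fun θ : ℝ => z + θ • v) v τ := by
    simpa using ((hasDerivAt_id τ).smul_const v).const_add z
  have := (hf (z + τ • v)).hasFDerivAt.comp_hasDerivAt τ hline
  rw [grad_inner f hf]
  exact this

private lemma conv_grad (f : EuclideanSpace ℝ (Fin d) → ℝ) (hf : Differentiable ℝ f)
    (hconv : ConvexOn ℝ Set.univ f) (z w : EuclideanSpace ℝ (Fin d)) :
    ⟪gradient f z, w - z⟫ ≤ f w - f z := by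
  set φ : ℝ → ℝ := fun θ => f (z + θ • (w - z)) with hφ
  have hφconv : ConvexOn ℝ Set.univ φ := by
    have := hconv.comp_affineMap (AffineMap.lineMap z w)
    simp only [Set.preimage_univ] at this
    refine (congrArg (ConvexOn ℝ Set.univ) ?_).mpr this
    funext θ
    simp only [φ, Function.comp_apply, AffineMap.lineMap_apply, vsub_eq_sub, vadd_eq_add]
    congr 1
    abel
  have hder : HasDerivAt φ ⟪gradient f z, w - z⟫ 0 := by
    have := line_deriv f hf z (w - z) 0
    simpa using this
  have := hφconv.le_slope_of_hasDerivAt (Set.mem_univ 0) (Set.mem_univ 1)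
    one_pos hder
  rw [slope_def_field] at this
  have h0 : φ 0 = f z := by simp [φ]
  have h1 : φ 1 = f w := by simp [φ]
  rw [h0, h1] at this
  simpa using this

private lemma descent (f : EuclideanSpace ℝ (Fin d) → ℝ) (hf : Differentiable ℝ f)
    (L : ℝ) (hL : 0 < L)
    (hsmooth : ∀ x y, ‖gradient f x - gradient f y‖ ≤ L * ‖x - y‖)
    (z v : EuclideanSpace ℝ (Fin d)) :
    f (z + v) ≤ f z + ⟪gradient f z, v⟫ + L / 2 * ‖v‖ ^ 2 := by
  set ψ : ℝ → ℝ := fun θ => f (z + θ • v) - θ * ⟪gradient f z, v⟫ - θ ^ 2 * (L / 2 * ‖v‖ ^ 2)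
    with hψ
  have hder : ∀ τ : ℝ, HasDerivAt ψ
      (⟪gradient f (z + τ • v), v⟫ - ⟪gradient f z, v⟫ - τ * (L * ‖v‖ ^ 2)) τ := by
    intro τ
    have h1 := line_deriv f hf z v τ
    have h2 : HasDerivAt (fun θ : ℝ => θ * ⟪gradient f z, v⟫) ⟪gradient f z, v⟫ τ := by
      simpa using (hasDerivAt_id τ).mul_const ⟪gradient f z, v⟫
    have h3 : HasDerivAt (fun θ : ℝ => θ ^ 2 * (L / 2 * ‖v‖ ^ 2))
        (2 * τ * (L / 2 * ‖v‖ ^ 2)) τ := by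
      simpa using (hasDerivAt_pow 2 τ).mul_const (L / 2 * ‖v‖ ^ 2)
    have := (h1.sub h2).sub h3
    exact this.congr_deriv (by ring)
  have hanti : AntitoneOn ψ (Set.Icc 0 1) := by
    apply antitoneOn_of_deriv_nonpos (convex_Icc 0 1)
    · exact fun θ _ => ((hder θ).continuousAt).continuousWithinAt
    · exact fun θ _ => ((hder θ).differentiableAt).differentiableWithinAt
    · intro τ hτ
      rw [interior_Icc] at hτ
      rw [(hder τ).deriv]
      have hbd : ⟪gradient f (z + τ • v) - gradient f z, v⟫
          ≤ L * (τ * ‖v‖ ^ 2) := by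
        calc ⟪gradient f (z + τ • v) - gradient f z, v⟫
            ≤ ‖gradient f (z + τ • v) - gradient f z‖ * ‖v‖ := real_inner_le_norm _ _
          _ ≤ (L * ‖z + τ • v - z‖) * ‖v‖ :=
              mul_le_mul_of_nonneg_right (hsmooth _ _) (norm_nonneg _)
          _ = L * (τ * ‖v‖ ^ 2) := by
              rw [add_sub_cancel_left, norm_smul, Real.norm_eq_abs, abs_of_pos hτ.1]
              ring
      rw [inner_sub_left] at hbd
      linarith
  have := hanti (Set.left_mem_Icc.2 zero_le_one) (Set.right_mem_Icc.2 zero_le_one) zero_le_one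
  simp only [ψ] at this
  simp only [zero_smul, add_zero, one_smul, zero_mul, one_mul, zero_pow, one_pow] at this
  linarith

private lemma grad_sq_le (f : EuclideanSpace ℝ (Fin d) → ℝ) (hf : Differentiable ℝ f)
    (L : ℝ) (hL : 0 < L)
    (hsmooth : ∀ x y, ‖gradient f x - gradient f y‖ ≤ L * ‖x - y‖)
    (m : ℝ) (hm : ∀ w, m ≤ f w) (z : EuclideanSpace ℝ (Fin d)) :
    ‖gradient f z‖ ^ 2 ≤ 2 * L * (f z - m) := by
  have h := descent f hf L hL hsmooth z (-(L⁻¹ • gradient f z))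
  rw [inner_neg_right, real_inner_smul_right, real_inner_self_eq_norm_sq] at h
  rw [norm_neg, norm_smul, Real.norm_eq_abs, abs_of_pos (inv_pos.2 hL)] at h
  have hm' := hm (z + -(L⁻¹ • gradient f z))
  have e : L / 2 * (L⁻¹ * ‖gradient f z‖) ^ 2 = L⁻¹ * ‖gradient f z‖ ^ 2 / 2 := by
    field_simp
  have h2 : L⁻¹ * ‖gradient f z‖ ^ 2 / 2 ≤ f z - m := by linarith
  have h3 := mul_le_mul_of_nonneg_left h2 (by linarith : (0:ℝ) ≤ 2 * L)
  have h4 : 2 * L * (L⁻¹ * ‖gradient f z‖ ^ 2 / 2) = ‖gradient f z‖ ^ 2 := by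
    field_simp
  linarith

private lemma per_i (L σ t F Fs m IP : ℝ) (hL : 0 < L) (hσ : 0 < σ) (ht : 0 ≤ t)
    (hF : 0 < F) (hm : 0 ≤ m) (hmF : m ≤ F) (hmFs : m ≤ Fs)
    (hts : t ≤ 2*L*(F - m)) (hIP : F - Fs ≤ IP) :
    -(2*(σ/(1+σ/(2*F)*t))*IP) + (σ/(1+σ/(2*F)*t))^2*t
      ≤ -(2*(σ/((1+2*σ*L)*(1+σ*L)))*(F-Fs)) + 6*L*σ^2/(1+2*σ*L)*(Fs-m)
        + 2*σ^2*L/(1+σ*L)*max 0 ((2*σ*L-1)/(2*σ*L+1))*m := by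
  have hcore := core L σ t (F-m) m hL hσ ht (by linarith) hm (by linarith) (by linarith)
  rw [sub_add_cancel] at hcore
  have hden : 0 < 1+σ/(2*F)*t := by positivity
  have hγpos : 0 < σ/(1+σ/(2*F)*t) := by positivity
  have hK : (0:ℝ) < (1+2*σ*L)*(1+σ*L) := by positivity
  -- γ ≤ σ
  have hγσ : σ/(1+σ/(2*F)*t) ≤ σ := div_le_self hσ.le (le_add_of_nonneg_right (by positivity))
  -- 2(σ - ρ) ≤ c1
  have hc1 : 2*(σ - σ/((1+2*σ*L)*(1+σ*L))) ≤ 6*L*σ^2/(1+2*σ*L) := by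
    have key : 6*L*σ^2/(1+2*σ*L) - 2*σ + 2*(σ/((1+2*σ*L)*(1+σ*L)))
        = 2*L^2*σ^3/((1+2*σ*L)*(1+σ*L)) := by
      field_simp
      ring
    have : (0:ℝ) ≤ 2*L^2*σ^3/((1+2*σ*L)*(1+σ*L)) := by positivity
    linarith
  -- main: (c1 - 2(γ - ρ)) * (Fs - m) ≥ 0
  have hc1γ : 2*(σ/(1+σ/(2*F)*t) - σ/((1+2*σ*L)*(1+σ*L))) ≤ 6*L*σ^2/(1+2*σ*L) := by
    linarith
  have hmain := mul_le_mul_of_nonneg_right hc1γ (by linarith : (0:ℝ) ≤ Fs - m)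
  have hip := mul_le_mul_of_nonneg_left hIP (by positivity : (0:ℝ) ≤ 2*(σ/(1+σ/(2*F)*t)))
  nlinarith [hcore, hmain, hip]


/-- One-step expected contraction of stochastic NGN in the strongly convex
case: the average over the uniformly random index `i` of the squared distance to `x*`
after one NGN step from `x` is at most
`(1 − μρ)‖x − x*‖² + (6Lσ²/(1+2σL)) Δ_int + (2σ²L/(1+σL)) max{0,(2σL−1)/(2σL+1)} Δ_pos`,
with `ρ = σ/((1+2σL)(1+σL))`. -/
theorem ngn_strongly_convex_one_step {d N : ℕ} (hN : 0 < N)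
    (f : Fin N → EuclideanSpace ℝ (Fin d) → ℝ) (L σ μ : ℝ)
    (hL : 0 < L) (hσ : 0 < σ) (hμ : 0 < μ)
    (hdiff : ∀ i, Differentiable ℝ (f i))
    (hpos : ∀ i x, 0 < f i x)
    (hsmooth : ∀ i x y, ‖gradient (f i) x - gradient (f i) y‖ ≤ L * ‖x - y‖)
    (hconv : ∀ i, ConvexOn ℝ Set.univ (f i))
    (fbar : EuclideanSpace ℝ (Fin d) → ℝ)
    (hfbar : ∀ z, fbar z = (N : ℝ)⁻¹ * ∑ i, f i z)
    (hsc : ∀ x y : EuclideanSpace ℝ (Fin d),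
      fbar y + ⟪gradient fbar y, x - y⟫ + μ / 2 * ‖x - y‖ ^ 2 ≤ fbar x)
    (xstar : EuclideanSpace ℝ (Fin d)) (hmin : ∀ y, fbar xstar ≤ fbar y)
    (x : EuclideanSpace ℝ (Fin d)) :
    (N : ℝ)⁻¹ *
        ∑ i, ‖x - (σ / (1 + σ / (2 * f i x) * ‖gradient (f i) x‖ ^ 2)) • gradient (f i) x
            - xstar‖ ^ 2 ≤
      (1 - μ * (σ / ((1 + 2 * σ * L) * (1 + σ * L)))) * ‖x - xstar‖ ^ 2
        + 6 * L * σ ^ 2 / (1 + 2 * σ * L) * ((N : ℝ)⁻¹ * ∑ i, (f i xstar - ⨅ y, f i y))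
        + 2 * σ ^ 2 * L / (1 + σ * L) * max 0 ((2 * σ * L - 1) / (2 * σ * L + 1))
          * ((N : ℝ)⁻¹ * ∑ i, ⨅ y, f i y) := by
  have hbdd : ∀ i, BddBelow (Set.range (f i)) := fun i =>
    ⟨0, fun v hv => by obtain ⟨y, hy⟩ := hv; exact hy ▸ (hpos i y).le⟩
  have hm0 : ∀ i, (0:ℝ) ≤ ⨅ y, f i y := fun i => le_ciInf fun y => (hpos i y).le
  have hmle : ∀ i z, (⨅ y, f i y) ≤ f i z := fun i z => ciInf_le (hbdd i) z
  -- per-index inequality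
  have step : ∀ i : Fin N,
      ‖x - (σ / (1 + σ / (2 * f i x) * ‖gradient (f i) x‖ ^ 2)) • gradient (f i) x
          - xstar‖ ^ 2
        ≤ ‖x - xstar‖ ^ 2
          + (-(2*(σ/((1+2*σ*L)*(1+σ*L)))*(f i x - f i xstar))
            + 6*L*σ^2/(1+2*σ*L)*(f i xstar - ⨅ y, f i y)
            + 2*σ^2*L/(1+σ*L)*max 0 ((2*σ*L-1)/(2*σ*L+1))*(⨅ y, f i y)) := by
    intro i
    set g := gradient (f i) x with hg
    set γ := σ / (1 + σ / (2 * f i x) * ‖g‖ ^ 2) with hγdef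
    have hexp : ‖x - γ • g - xstar‖ ^ 2
        = ‖x - xstar‖ ^ 2 - 2 * (γ * ⟪g, x - xstar⟫) + γ^2 * ‖g‖ ^ 2 := by
      have e1 : x - γ • g - xstar = (x - xstar) - γ • g := by abel
      rw [e1, norm_sub_sq_real, real_inner_smul_right, norm_smul, mul_pow,
        real_inner_comm]
      simp [sq_abs]
    have hIP : f i x - f i xstar ≤ ⟪g, x - xstar⟫ := by
      have h := conv_grad (f i) (hdiff i) (hconv i) x xstar
      rw [← hg] at h
      have e : ⟪g, x - xstar⟫ = -⟪g, xstar - x⟫ := by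
        rw [← inner_neg_right]
        congr 1
        abel
      rw [e]
      linarith
    have hgs := grad_sq_le (f i) (hdiff i) L hL (hsmooth i) (⨅ y, f i y) (hmle i) x
    rw [← hg] at hgs
    have hper := per_i L σ (‖g‖^2) (f i x) (f i xstar) (⨅ y, f i y) ⟪g, x - xstar⟫
      hL hσ (by positivity) (hpos i x) (hm0 i) (hmle i x) (hmle i xstar) hgs hIP
    rw [hexp]
    rw [hγdef]
    linarith [hper]
  -- sum it up
  have hsum : (∑ i, ‖x - (σ / (1 + σ / (2 * f i x) * ‖gradient (f i) x‖ ^ 2)) •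
        gradient (f i) x - xstar‖ ^ 2)
      ≤ (N:ℝ) * ‖x - xstar‖ ^ 2
        - 2*(σ/((1+2*σ*L)*(1+σ*L)))*((∑ i, f i x) - ∑ i, f i xstar)
        + 6*L*σ^2/(1+2*σ*L)*((∑ i, f i xstar) - ∑ i, (⨅ y, f i y))
        + 2*σ^2*L/(1+σ*L)*max 0 ((2*σ*L-1)/(2*σ*L+1))*(∑ i, (⨅ y, f i y)) := by
    calc (∑ i, ‖x - (σ / (1 + σ / (2 * f i x) * ‖gradient (f i) x‖ ^ 2)) •
        gradient (f i) x - xstar‖ ^ 2)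
        ≤ ∑ i, (‖x - xstar‖ ^ 2
          + (-(2*(σ/((1+2*σ*L)*(1+σ*L)))*(f i x - f i xstar))
            + 6*L*σ^2/(1+2*σ*L)*(f i xstar - ⨅ y, f i y)
            + 2*σ^2*L/(1+σ*L)*max 0 ((2*σ*L-1)/(2*σ*L+1))*(⨅ y, f i y))) :=
          Finset.sum_le_sum fun i _ => step i
      _ = _ := by
          simp only [Finset.sum_add_distrib, Finset.sum_sub_distrib,
            Finset.sum_neg_distrib, ← Finset.mul_sum, Finset.sum_const,
            Finset.card_univ, Fintype.card_fin, nsmul_eq_mul]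
          ring
  -- strong convexity at minimizer
  have hdfbar : Differentiable ℝ fbar := by
    have e : fbar = fun z => (N : ℝ)⁻¹ * ∑ i, f i z := funext hfbar
    rw [e]
    exact Differentiable.const_mul (Differentiable.fun_sum fun i _ => hdiff i) _
  have hgradbar : gradient fbar xstar = 0 := by
    have hloc : IsLocalMin fbar xstar := Filter.Eventually.of_forall hmin
    rw [gradient, hloc.fderiv_eq_zero, map_zero]
  have hmu2 := hsc x xstar
  rw [hgradbar, inner_zero_left, hfbar x, hfbar xstar] at hmu2
  -- final combination
  have hNpos : (0:ℝ) < (N:ℝ) := by exact_mod_cast hN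
  have hNinv : (0:ℝ) ≤ (N:ℝ)⁻¹ := by positivity
  have hρ : (0:ℝ) ≤ 2*(σ/((1+2*σ*L)*(1+σ*L))) := by positivity
  have hmul := mul_le_mul_of_nonneg_left hmu2 hρ
  have hfin := mul_le_mul_of_nonneg_left hsum hNinv
  have hNd : (N:ℝ)⁻¹ * ((N:ℝ) * ‖x - xstar‖ ^ 2) = ‖x - xstar‖ ^ 2 := by
    field_simp
  rw [Finset.sum_sub_distrib]
  nlinarith [hfin, hmul, hNd]
end

section
/- Let f = (1/N) Σ_{i=1}^N f_i where each f_i : ℝ^d → ℝ is non-negative, differentiable and L-smooth, with f_i(x) > 0 for all i and x. Fix x ∈ ℝ^d, let σ > 0, for each i let γ_i = σ / (1 + (σ/(2 f_i(x))) ‖∇f_i(x)‖²), and let ζ² be any real number with (1/N) Σ_{i=1}^N ‖∇f(x) − ∇f_i(x)‖² ≤ ζ². Then − (1/N) Σ_{i=1}^N γ_i ⟨∇f(x), ∇f_i(x)⟩ ≤ − σ ((1 − σL)/(1 + σL)) ‖∇f(x)‖² + (σ²L/(σL + 1)) ζ². -/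
set_option linter.unusedSectionVars false

open scoped RealInnerProductSpace

variable {F : Type*} [NormedAddCommGroup F] [InnerProductSpace ℝ F] [CompleteSpace F]

lemma grad_inner_eq (f : F → ℝ) (x v : F) : ⟪gradient f x, v⟫ = fderiv ℝ f x v := by
  simp [gradient, InnerProductSpace.toDual_symm_apply]

lemma line_hasDerivAt (x v : F) (t : ℝ) : HasDerivAt (fun t : ℝ => x - t • v) (-v) t := by
  simpa using ((hasDerivAt_id t).smul_const v).const_sub x

lemma sq_norm_grad_le (f : F → ℝ) {L : ℝ} (hL : 0 ≤ L)
    (hdiff : Differentiable ℝ f) (hpos : ∀ z, 0 < f z)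
    (hsm : ∀ x y, ‖gradient f x - gradient f y‖ ≤ L * ‖x - y‖) (x : F) :
    ‖gradient f x‖ ^ 2 ≤ 2 * L * f x := by
  set v := gradient f x with hv
  by_cases hv0 : v = 0
  · rw [hv0]; simp; exact mul_nonneg (by linarith) (hpos x).le
  have key : ∀ t : ℝ, 0 ≤ t → t * ‖v‖ ^ 2 - L * t ^ 2 * ‖v‖ ^ 2 / 2 ≤ f x := by
    intro t ht
    set h : ℝ → ℝ := fun t => f (x - t • v) - f x + t * ‖v‖ ^ 2 - L * t ^ 2 * ‖v‖ ^ 2 / 2 with hh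
    have hder : ∀ s : ℝ, HasDerivAt h
        (-⟪gradient f (x - s • v), v⟫ + ‖v‖ ^ 2 - L * s * ‖v‖ ^ 2) s := by
      intro s
      have h1 : HasDerivAt (fun t : ℝ => f (x - t • v)) (-⟪gradient f (x - s • v), v⟫) s := by
        have := (hdiff (x - s • v)).hasFDerivAt.comp_hasDerivAt s (line_hasDerivAt x v s)
        have h2 : fderiv ℝ f (x - s • v) (-v) = -⟪gradient f (x - s • v), v⟫ := by
          rw [grad_inner_eq]; simp
        rwa [h2] at this
      have h3 : HasDerivAt (fun t : ℝ => f (x - t • v) - f x + t * ‖v‖ ^ 2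
          - L * t ^ 2 * ‖v‖ ^ 2 / 2)
          (-⟪gradient f (x - s • v), v⟫ + ‖v‖ ^ 2 - L * s * ‖v‖ ^ 2) s := by
        have h4 : HasDerivAt (fun t : ℝ => L * t ^ 2 * ‖v‖ ^ 2 / 2) (L * s * ‖v‖ ^ 2) s := by
          have := (((hasDerivAt_pow 2 s).const_mul L).mul_const (‖v‖ ^ 2)).div_const 2
          exact this.congr_deriv (by ring)
        have h5 := ((h1.sub_const (f x)).add ((hasDerivAt_id s).mul_const (‖v‖ ^ 2))).sub h4
        exact h5.congr_deriv (by ring)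
      exact h3
    have hmono : AntitoneOn h (Set.Ici (0:ℝ)) := by
      apply antitoneOn_of_deriv_nonpos (convex_Ici 0)
      · exact fun s _ => ((hder s).continuousAt).continuousWithinAt
      · exact fun s _ => ((hder s).differentiableAt).differentiableWithinAt
      · intro s hs
        rw [(hder s).deriv]
        have hs' : (0:ℝ) < s := by simpa using hs
        have hb : ‖v‖ ^ 2 - ⟪gradient f (x - s • v), v⟫ ≤ L * s * ‖v‖ ^ 2 := by
          have e1 : ‖v‖ ^ 2 - ⟪gradient f (x - s • v), v⟫
              = ⟪v - gradient f (x - s • v), v⟫ := by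
            rw [inner_sub_left, real_inner_self_eq_norm_sq]
          have e2 : ⟪v - gradient f (x - s • v), v⟫ ≤ ‖v - gradient f (x - s • v)‖ * ‖v‖ :=
            real_inner_le_norm _ _
          have e3 : ‖v - gradient f (x - s • v)‖ ≤ L * (s * ‖v‖) := by
            have := hsm x (x - s • v)
            rw [← hv] at this
            have : ‖v - gradient f (x - s • v)‖ ≤ L * ‖x - (x - s • v)‖ := this
            simpa [norm_smul, abs_of_pos hs'] using this
          have hvnn : (0:ℝ) ≤ ‖v‖ := norm_nonneg v
          calc ‖v‖ ^ 2 - ⟪gradient f (x - s • v), v⟫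
              ≤ ‖v - gradient f (x - s • v)‖ * ‖v‖ := by rw [e1]; exact e2
            _ ≤ L * (s * ‖v‖) * ‖v‖ := by
                apply mul_le_mul_of_nonneg_right e3 hvnn
            _ = L * s * ‖v‖ ^ 2 := by ring
        linarith
    have h0 : h 0 = 0 := by simp [hh]
    have := hmono (Set.self_mem_Ici) (Set.mem_Ici.2 ht) ht
    rw [h0] at this
    have hfp := (hpos (x - t • v)).le
    simp only [hh] at this
    linarith
  have hvpos : 0 < ‖v‖ ^ 2 := by
    have : 0 < ‖v‖ := norm_pos_iff.2 hv0
    positivity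
  rcases eq_or_lt_of_le hL with hL0 | hLpos
  · exfalso
    have := key ((f x + 1) / ‖v‖ ^ 2) (le_of_lt (div_pos (by linarith [hpos x]) hvpos))
    rw [← hL0] at this
    have : (f x + 1) / ‖v‖ ^ 2 * ‖v‖ ^ 2 ≤ f x := by linarith
    rw [div_mul_cancel₀ _ (ne_of_gt hvpos)] at this
    linarith
  · have h := key (1 / L) (by positivity)
    have hL' : L ≠ 0 := ne_of_gt hLpos
    have h2 : 1 / L * ‖v‖ ^ 2 - L * (1 / L) ^ 2 * ‖v‖ ^ 2 / 2 = ‖v‖ ^ 2 / (2 * L) := by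
      field_simp; ring
    rw [h2, div_le_iff₀ (by positivity)] at h
    linarith


lemma grad_avg {N : ℕ} (f : Fin N → F → ℝ) (hdiff : ∀ i, Differentiable ℝ (f i))
    (fbar : F → ℝ) (c : ℝ) (hfbar : ∀ z, fbar z = c * ∑ i, f i z) (x : F) :
    gradient fbar x = c • ∑ i, gradient (f i) x := by
  have hfb : fbar = fun z => c * ∑ i, f i z := funext hfbar
  subst hfb
  have hf : HasFDerivAt (fun z => c * ∑ i, f i z) (c • ∑ i, fderiv ℝ (f i) x) x :=
    (HasFDerivAt.fun_sum fun i _ => (hdiff i x).hasFDerivAt).const_mul c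
  have := (hasFDerivAt_iff_hasGradientAt.mp hf).gradient
  rw [this, map_smul, map_sum]
  rfl

lemma pt_arith (σ γ γl G W I : ℝ) (h1 : γl ≤ γ) (h2 : γ ≤ σ)
    (hI : |I| ≤ G * W) :
    -(γ * (G ^ 2 - I)) + σ * ((G ^ 2 - I) - G ^ 2)
      ≤ (-(γl * G ^ 2) + (σ - γl) * G ^ 2 / 2) + (σ - γl) / 2 * W ^ 2 := by
  have hI2 : |I| ≤ (G ^ 2 + W ^ 2) / 2 := le_trans hI (by nlinarith [sq_nonneg (G - W)])
  have h3 : -(σ - γ) * I ≤ (σ - γ) * |I| := by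
    have := mul_le_mul_of_nonneg_left (neg_le_abs I) (show (0:ℝ) ≤ σ - γ by linarith)
    linarith
  have h4 : (σ - γ) * |I| ≤ (σ - γl) * |I| :=
    mul_le_mul_of_nonneg_right (by linarith) (abs_nonneg I)
  have h5 : (σ - γl) * |I| ≤ (σ - γl) * ((G ^ 2 + W ^ 2) / 2) :=
    mul_le_mul_of_nonneg_left hI2 (by linarith)
  have h6 : -(γ * G ^ 2) ≤ -(γl * G ^ 2) := by
    have := mul_le_mul_of_nonneg_right h1 (sq_nonneg G); linarith
  nlinarith [h3, h4, h5, h6]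

lemma final_arith (σ L G Z : ℝ) (hσ : 0 < σ) (hL : 0 ≤ L) (hG : 0 ≤ G) (hZ : 0 ≤ Z) :
    -(σ / (1 + σ * L) * G) + (σ - σ / (1 + σ * L)) * G / 2 + (σ - σ / (1 + σ * L)) / 2 * Z ≤
      -(σ * ((1 - σ * L) / (1 + σ * L))) * G + σ ^ 2 * L / (σ * L + 1) * Z := by
  have hD : (0:ℝ) < 1 + σ * L := by nlinarith
  rw [← sub_nonneg]
  have e : -(σ * ((1 - σ * L) / (1 + σ * L))) * G + σ ^ 2 * L / (σ * L + 1) * Z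
      - (-(σ / (1 + σ * L) * G) + (σ - σ / (1 + σ * L)) * G / 2 + (σ - σ / (1 + σ * L)) / 2 * Z)
      = (σ ^ 2 * L * G / 2 + σ ^ 2 * L * Z / 2) / (1 + σ * L) := by
    field_simp
    ring
  rw [e]
  apply div_nonneg _ hD.le
  nlinarith [mul_nonneg (mul_nonneg (sq_nonneg σ) hL) hG,
    mul_nonneg (mul_nonneg (sq_nonneg σ) hL) hZ]

/-- Bound on the expected inner product of the full gradient with the
stochastic NGN update direction:
`−(1/N) Σᵢ γᵢ ⟨∇f(x), ∇fᵢ(x)⟩ ≤ −σ((1−σL)/(1+σL))‖∇f(x)‖² + (σ²L/(σL+1)) ζ²`. -/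
theorem ngn_inner_product_bound {d N : ℕ} (hN : 0 < N)
    (f : Fin N → EuclideanSpace ℝ (Fin d) → ℝ) (L σ : ℝ) (hL : 0 ≤ L) (hσ : 0 < σ)
    (hdiff : ∀ i, Differentiable ℝ (f i))
    (hpos : ∀ i x, 0 < f i x)
    (hsmooth : ∀ i x y, ‖gradient (f i) x - gradient (f i) y‖ ≤ L * ‖x - y‖)
    (fbar : EuclideanSpace ℝ (Fin d) → ℝ)
    (hfbar : ∀ z, fbar z = (N : ℝ)⁻¹ * ∑ i, f i z)
    (x : EuclideanSpace ℝ (Fin d)) (ζsq : ℝ)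
    (hζ : (N : ℝ)⁻¹ * ∑ i, ‖gradient fbar x - gradient (f i) x‖ ^ 2 ≤ ζsq) :
    -((N : ℝ)⁻¹ * ∑ i, σ / (1 + σ / (2 * f i x) * ‖gradient (f i) x‖ ^ 2)
        * ⟪gradient fbar x, gradient (f i) x⟫) ≤
      -(σ * ((1 - σ * L) / (1 + σ * L))) * ‖gradient fbar x‖ ^ 2
        + σ ^ 2 * L / (σ * L + 1) * ζsq := by
  set g := gradient fbar x with hgdef
  set p : Fin N → EuclideanSpace ℝ (Fin d) := fun i => gradient (f i) x with hpdef
  set c : ℝ := (N : ℝ)⁻¹ with hcdef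
  set q : Fin N → ℝ := fun i => σ / (2 * f i x) * ‖p i‖ ^ 2 with hqdef
  set γ : Fin N → ℝ := fun i => σ / (1 + q i) with hγdef
  set γl : ℝ := σ / (1 + σ * L) with hγldef
  have hNne : (N : ℝ) ≠ 0 := Nat.cast_ne_zero.mpr hN.ne'
  have hcN : c * (N : ℝ) = 1 := inv_mul_cancel₀ hNne
  have hcpos : 0 < c := by positivity
  -- bounds on q and γ
  have hq0 : ∀ i, 0 ≤ q i := by
    intro i
    have := (hpos i x).le
    have h2 : 0 < 2 * f i x := by linarith [hpos i x]
    positivity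
  have hqL : ∀ i, q i ≤ σ * L := by
    intro i
    have hfi : 0 < 2 * f i x := by linarith [hpos i x]
    have hgr := sq_norm_grad_le (f i) hL (hdiff i) (hpos i) (hsmooth i) x
    show σ / (2 * f i x) * ‖p i‖ ^ 2 ≤ σ * L
    rw [div_mul_eq_mul_div, div_le_iff₀ hfi]
    nlinarith [hgr]
  have hγl : ∀ i, γl ≤ γ i := by
    intro i
    apply div_le_div_of_nonneg_left hσ.le (by linarith [hq0 i]) (by linarith [hqL i])
  have hγσ : ∀ i, γ i ≤ σ := by
    intro i
    exact div_le_self hσ.le (by linarith [hq0 i])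
  -- gradient of average
  have hg : g = c • ∑ i, p i := grad_avg f hdiff fbar c hfbar x
  have hT : c * ∑ i, ⟪g, p i⟫ = ‖g‖ ^ 2 := by
    have e : ⟪g, c • ∑ i, p i⟫ = c * ∑ i, ⟪g, p i⟫ := by
      rw [inner_smul_right, inner_sum]
    rw [← e, ← hg, real_inner_self_eq_norm_sq]
  -- pointwise bound
  have hpt : ∀ i, -(γ i * ⟪g, p i⟫) + σ * (⟪g, p i⟫ - ‖g‖ ^ 2)
      ≤ (-(γl * ‖g‖ ^ 2) + (σ - γl) * ‖g‖ ^ 2 / 2) + (σ - γl) / 2 * ‖g - p i‖ ^ 2 := by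
    intro i
    have e : ⟪g, p i⟫ = ‖g‖ ^ 2 - ⟪g, g - p i⟫ := by
      rw [inner_sub_right, real_inner_self_eq_norm_sq]; ring
    rw [e]
    exact pt_arith σ (γ i) γl ‖g‖ ‖g - p i‖ ⟪g, g - p i⟫ (hγl i) (hγσ i)
      (abs_real_inner_le_norm _ _)
  have hsum := Finset.sum_le_sum (fun i (_ : i ∈ Finset.univ) => hpt i)
  -- compute both sums
  have l1 : ∑ i, (-(γ i * ⟪g, p i⟫) + σ * (⟪g, p i⟫ - ‖g‖ ^ 2))
      = -(∑ i, γ i * ⟪g, p i⟫) + σ * (∑ i, ⟪g, p i⟫) - (N : ℝ) * (σ * ‖g‖ ^ 2) := by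
    simp [Finset.sum_add_distrib, mul_sub, Finset.sum_sub_distrib, ← Finset.mul_sum,
      Finset.card_univ]
    ring
  have l2 : ∑ i, ((-(γl * ‖g‖ ^ 2) + (σ - γl) * ‖g‖ ^ 2 / 2) + (σ - γl) / 2 * ‖g - p i‖ ^ 2)
      = (N : ℝ) * (-(γl * ‖g‖ ^ 2) + (σ - γl) * ‖g‖ ^ 2 / 2)
        + (σ - γl) / 2 * ∑ i, ‖g - p i‖ ^ 2 := by
    simp [Finset.sum_add_distrib, ← Finset.mul_sum, Finset.card_univ]
    ring
  rw [l1, l2] at hsum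
  have hmul := mul_le_mul_of_nonneg_left hsum hcpos.le
  have hZ0 : 0 ≤ ζsq := le_trans (mul_nonneg hcpos.le (Finset.sum_nonneg fun i _ => sq_nonneg _)) hζ
  have hS : (σ - γl) / 2 * (c * ∑ i, ‖g - p i‖ ^ 2) ≤ (σ - γl) / 2 * ζsq := by
    apply mul_le_mul_of_nonneg_left hζ
    have hγlσ : γl ≤ σ := le_trans (hγl ⟨0, hN⟩) (hγσ ⟨0, hN⟩)
    linarith
  have key : -(c * ∑ i, γ i * ⟪g, p i⟫)
      ≤ -(γl * ‖g‖ ^ 2) + (σ - γl) * ‖g‖ ^ 2 / 2 + (σ - γl) / 2 * ζsq := by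
    have e1 : c * (-(∑ i, γ i * ⟪g, p i⟫) + σ * (∑ i, ⟪g, p i⟫) - (N : ℝ) * (σ * ‖g‖ ^ 2))
        = -(c * ∑ i, γ i * ⟪g, p i⟫) := by
      linear_combination σ * hT - (σ * ‖g‖ ^ 2) * hcN
    have e2 : c * ((N : ℝ) * (-(γl * ‖g‖ ^ 2) + (σ - γl) * ‖g‖ ^ 2 / 2)
          + (σ - γl) / 2 * ∑ i, ‖g - p i‖ ^ 2)
        = (-(γl * ‖g‖ ^ 2) + (σ - γl) * ‖g‖ ^ 2 / 2)
          + (σ - γl) / 2 * (c * ∑ i, ‖g - p i‖ ^ 2) := by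
      linear_combination (-(γl * ‖g‖ ^ 2) + (σ - γl) * ‖g‖ ^ 2 / 2) * hcN
    rw [e1, e2] at hmul
    linarith [hS]
  calc -(c * ∑ i, γ i * ⟪g, p i⟫)
      ≤ -(γl * ‖g‖ ^ 2) + (σ - γl) * ‖g‖ ^ 2 / 2 + (σ - γl) / 2 * ζsq := key
    _ ≤ _ := final_arith σ L (‖g‖ ^ 2) ζsq hσ hL (sq_nonneg _) hZ0
end

section
/- Let f = (1/N) Σ_{i=1}^N f_i where each f_i : ℝ^d → ℝ is non-negative, differentiable and L-smooth, with f_i(x) > 0 for all i and x; then f is also L-smooth. Fix x ∈ ℝ^d, let 0 < σ ≤ 1/(2L), for each i let γ_i = σ / (1 + (σ/(2 f_i(x))) ‖∇f_i(x)‖²), and let ζ² be any real number with sup_y (1/N) Σ_{i=1}^N ‖∇f(y) − ∇f_i(y)‖² ≤ ζ². Then (1/N) Σ_{i=1}^N f(x − γ_i ∇f_i(x)) − f(x) ≤ − (σ/12) ‖∇f(x)‖² + (3σ²L/2) ζ². -/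
open scoped RealInnerProductSpace

variable {E : Type*} [NormedAddCommGroup E] [InnerProductSpace ℝ E] [CompleteSpace E]

private lemma ngn_descent_lemma {φ : E → ℝ} {L : ℝ} (hL : 0 ≤ L) (hφ : Differentiable ℝ φ)
    (hlip : ∀ a b, ‖gradient φ a - gradient φ b‖ ≤ L * ‖a - b‖) (x y : E) :
    φ y ≤ φ x + ⟪gradient φ x, y - x⟫ + L / 2 * ‖y - x‖ ^ 2 := by
  set v := y - x with hv
  have hcontg : Continuous (gradient φ) := by
    apply (LipschitzWith.of_dist_le_mul (K := L.toNNReal) ?_).continuous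
    intro a b
    simpa [dist_eq_norm, Real.coe_toNNReal L hL] using hlip a b
  have hline : ∀ t : ℝ, HasDerivAt (fun t : ℝ => x + t • v) v t := by
    intro t
    simpa using ((hasDerivAt_id t).smul_const v).const_add x
  have hderiv : ∀ t : ℝ, HasDerivAt (fun t : ℝ => φ (x + t • v))
      ⟪gradient φ (x + t • v), v⟫ t := by
    intro t
    have h1 : HasFDerivAt φ (InnerProductSpace.toDual ℝ E (gradient φ (x + t • v))) (x + t • v) :=
      (hφ (x + t • v)).hasGradientAt
    convert h1.comp_hasDerivAt t (hline t) using 1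
    all_goals rfl
  have hcont : Continuous fun t : ℝ => ⟪gradient φ (x + t • v), v⟫ := by
    exact (hcontg.comp (continuous_const.add (continuous_id.smul continuous_const))).inner
      continuous_const
  have hftc : ∫ t in (0:ℝ)..1, ⟪gradient φ (x + t • v), v⟫ = φ y - φ x := by
    have := intervalIntegral.integral_eq_sub_of_hasDerivAt (a := 0) (b := 1)
      (f := fun t : ℝ => φ (x + t • v)) (f' := fun t => ⟪gradient φ (x + t • v), v⟫)
      (fun t _ => hderiv t) (hcont.intervalIntegrable 0 1)
    simpa [hv] using this
  have hc2 : Continuous fun t : ℝ => ⟪gradient φ x, v⟫ + L * t * ‖v‖ ^ 2 := by fun_prop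
  have hbound : ∫ t in (0:ℝ)..1, ⟪gradient φ (x + t • v), v⟫ ≤
      ∫ t in (0:ℝ)..1, (⟪gradient φ x, v⟫ + L * t * ‖v‖ ^ 2) := by
    apply intervalIntegral.integral_mono_on (by norm_num) (hcont.intervalIntegrable 0 1)
      (hc2.intervalIntegrable 0 1)
    intro t ht
    have h1 : ⟪gradient φ (x + t • v) - gradient φ x, v⟫ ≤ L * t * ‖v‖ ^ 2 := by
      calc ⟪gradient φ (x + t • v) - gradient φ x, v⟫
          ≤ ‖gradient φ (x + t • v) - gradient φ x‖ * ‖v‖ := real_inner_le_norm _ _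
        _ ≤ (L * ‖(x + t • v) - x‖) * ‖v‖ := by
            gcongr; exact hlip _ _
        _ = L * t * ‖v‖ ^ 2 := by
            have : ‖(x + t • v) - x‖ = t * ‖v‖ := by
              simp [norm_smul, abs_of_nonneg ht.1]
            rw [this]; ring
    have := inner_sub_left (𝕜 := ℝ) (gradient φ (x + t • v)) (gradient φ x) v
    linarith [h1, this.le, this.ge]
  have hcomp : ∫ t in (0:ℝ)..1, (⟪gradient φ x, v⟫ + L * t * ‖v‖ ^ 2) =
      ⟪gradient φ x, v⟫ + L / 2 * ‖v‖ ^ 2 := by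
    have hc3 : Continuous fun t : ℝ => L * t * ‖v‖ ^ 2 := by fun_prop
    rw [intervalIntegral.integral_add (intervalIntegrable_const) (hc3.intervalIntegrable 0 1)]
    have h2 : ∫ t in (0:ℝ)..1, L * t * ‖v‖ ^ 2 = L / 2 * ‖v‖ ^ 2 := by
      have he : (fun t : ℝ => L * t * ‖v‖ ^ 2) = fun t : ℝ => (L * ‖v‖ ^ 2) * t := by
        funext t; ring
      rw [he, intervalIntegral.integral_const_mul, integral_id]
      ring
    rw [h2]
    simp
  rw [hftc, hcomp] at hbound
  linarith

private lemma ngn_sq_grad_le {φ : E → ℝ} {L : ℝ} (hL : 0 < L)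
    (hpos : ∀ z, 0 < φ z) (x : E)
    (descent : ∀ y, φ y ≤ φ x + ⟪gradient φ x, y - x⟫ + L / 2 * ‖y - x‖ ^ 2) :
    ‖gradient φ x‖ ^ 2 ≤ 2 * L * φ x := by
  set g := gradient φ x with hg
  have h1 := descent (x - L⁻¹ • g)
  have h2 : (x - L⁻¹ • g) - x = -(L⁻¹ • g) := by abel
  rw [h2] at h1
  have h3 : ⟪g, -(L⁻¹ • g)⟫ = -(L⁻¹ * ‖g‖ ^ 2) := by
    rw [inner_neg_right, real_inner_smul_right, real_inner_self_eq_norm_sq]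
  have h4 : ‖-(L⁻¹ • g)‖ ^ 2 = L⁻¹ ^ 2 * ‖g‖ ^ 2 := by
    rw [norm_neg, norm_smul, mul_pow, Real.norm_eq_abs, sq_abs]
  rw [h3, h4] at h1
  have h5 := (hpos (x - L⁻¹ • g)).le
  have hLinv : L * L⁻¹ = 1 := mul_inv_cancel₀ hL.ne'
  have h6 : L ^ 2 * L⁻¹ ^ 2 = 1 := by rw [← mul_pow, hLinv, one_pow]
  nlinarith [mul_le_mul_of_nonneg_left h1 hL.le, h6, hLinv, mul_nonneg hL.le h5]

private lemma ngn_arith {σ L γ G P Q gbn en : ℝ} (hσ : 0 < σ) (hL : 0 < L)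
    (hγ1 : 2 * σ / 3 ≤ γ) (hγ2 : γ ≤ σ) (hγ3 : σ - γ ≤ σ ^ 2 * L)
    (hG : G = gbn ^ 2) (hQ : Q = en ^ 2) (hgbn : 0 ≤ gbn) (hen : 0 ≤ en)
    (hPle : P ≤ gbn * en) (hsqg : 0 ≤ G + 2 * P + Q) :
    -(γ * (G + P)) + L / 2 * (γ ^ 2 * (G + 2 * P + Q)) ≤
      (-(2 * σ / 3) + 3 / 4 * σ ^ 2 * L) * G + (L * σ ^ 2 - σ) * P
        + (3 * σ ^ 2 * L / 2) * Q := by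
  have h7 : 0 ≤ σ - γ := by linarith
  have hamgm : gbn * en ≤ G / 4 + Q := by nlinarith [sq_nonneg (gbn / 2 - en)]
  have hkey1 : (σ - γ) * P ≤ σ ^ 2 * L * (G / 4 + Q) := by
    calc (σ - γ) * P ≤ (σ - γ) * (gbn * en) := mul_le_mul_of_nonneg_left hPle h7
      _ ≤ σ ^ 2 * L * (G / 4 + Q) := by
          apply mul_le_mul hγ3 hamgm (by positivity) (by positivity)
  have hkey2 : L / 2 * (γ ^ 2 * (G + 2 * P + Q)) ≤ L / 2 * (σ ^ 2 * (G + 2 * P + Q)) := by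
    have h8 : γ ^ 2 ≤ σ ^ 2 := by nlinarith
    have := mul_le_mul_of_nonneg_right h8 hsqg
    nlinarith
  have hkey3 : 2 * σ / 3 * G ≤ γ * G := by
    apply mul_le_mul_of_nonneg_right hγ1 (by rw [hG]; positivity)
  linarith [hkey1, hkey2, hkey3]

set_option maxHeartbeats 1000000 in
/-- Expected one-step decrease of the full objective under stochastic NGN
with `0 < σ ≤ 1/(2L)`:
`(1/N) Σᵢ f(x − γᵢ ∇fᵢ(x)) − f(x) ≤ −(σ/12)‖∇f(x)‖² + (3σ²L/2) ζ²`. -/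
theorem ngn_nonconvex_one_step {d N : ℕ} (hN : 0 < N)
    (f : Fin N → EuclideanSpace ℝ (Fin d) → ℝ) (L σ : ℝ) (hL : 0 < L)
    (hσ : 0 < σ) (hσL : σ ≤ 1 / (2 * L))
    (hdiff : ∀ i, Differentiable ℝ (f i))
    (hpos : ∀ i x, 0 < f i x)
    (hsmooth : ∀ i x y, ‖gradient (f i) x - gradient (f i) y‖ ≤ L * ‖x - y‖)
    (fbar : EuclideanSpace ℝ (Fin d) → ℝ)
    (hfbar : ∀ z, fbar z = (N : ℝ)⁻¹ * ∑ i, f i z)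
    (x : EuclideanSpace ℝ (Fin d)) (ζsq : ℝ)
    (hζ : ∀ y, (N : ℝ)⁻¹ * ∑ i, ‖gradient fbar y - gradient (f i) y‖ ^ 2 ≤ ζsq) :
    (N : ℝ)⁻¹ * (∑ i, fbar
        (x - (σ / (1 + σ / (2 * f i x) * ‖gradient (f i) x‖ ^ 2)) • gradient (f i) x))
      - fbar x ≤
      -(σ / 12) * ‖gradient fbar x‖ ^ 2 + 3 * σ ^ 2 * L / 2 * ζsq := by
  classical
  have hNR : (0:ℝ) < (N:ℝ) := by exact_mod_cast hN
  have hNne : (N:ℝ) ≠ 0 := hNR.ne'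
  have hσL2 : σ * L ≤ 1 / 2 := by
    rw [le_div_iff₀ (by positivity : (0:ℝ) < 2 * L)] at hσL
    linarith
  have hfbar_fun : fbar = fun z => (N : ℝ)⁻¹ * ∑ i, f i z := funext hfbar
  -- gradient of fbar
  have hgradbar : ∀ y, HasGradientAt fbar ((N:ℝ)⁻¹ • ∑ i, gradient (f i) y) y := by
    intro y
    rw [hasGradientAt_iff_hasFDerivAt, map_smul, map_sum]
    have hsum : HasFDerivAt (fun z => ∑ i, f i z)
        (∑ i, (InnerProductSpace.toDual ℝ (EuclideanSpace ℝ (Fin d))) (gradient (f i) y)) y :=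
      HasFDerivAt.fun_sum (fun i _ => hasGradientAt_iff_hasFDerivAt.mp (hdiff i y).hasGradientAt)
    rw [hfbar_fun]
    exact hsum.const_mul _
  have hgb_eq : ∀ y, gradient fbar y = (N:ℝ)⁻¹ • ∑ i, gradient (f i) y :=
    fun y => (hgradbar y).gradient
  have hdiffbar : Differentiable ℝ fbar := fun y => (hgradbar y).differentiableAt
  have hbarlip : ∀ a b, ‖gradient fbar a - gradient fbar b‖ ≤ L * ‖a - b‖ := by
    intro a b
    rw [hgb_eq a, hgb_eq b, ← smul_sub, ← Finset.sum_sub_distrib, norm_smul]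
    have h1 : ‖∑ i, (gradient (f i) a - gradient (f i) b)‖ ≤ ∑ _i : Fin N, L * ‖a - b‖ :=
      (norm_sum_le _ _).trans (Finset.sum_le_sum fun i _ => hsmooth i a b)
    rw [Finset.sum_const, Finset.card_univ, Fintype.card_fin, nsmul_eq_mul] at h1
    have h2 : ‖((N:ℝ)⁻¹)‖ = (N:ℝ)⁻¹ := by
      rw [Real.norm_eq_abs, abs_of_nonneg (by positivity)]
    rw [h2]
    calc (N:ℝ)⁻¹ * ‖∑ i, (gradient (f i) a - gradient (f i) b)‖
        ≤ (N:ℝ)⁻¹ * ((N:ℝ) * (L * ‖a - b‖)) := by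
          apply mul_le_mul_of_nonneg_left h1 (by positivity)
      _ = L * ‖a - b‖ := by field_simp
  have hdesc := fun y => ngn_descent_lemma hL.le hdiffbar hbarlip x y
  -- abbreviations
  set g : Fin N → EuclideanSpace ℝ (Fin d) := fun i => gradient (f i) x with hgdef
  have hgrw : ∀ i, gradient (f i) x = g i := fun i => rfl
  set gb : EuclideanSpace ℝ (Fin d) := gradient fbar x with hgbdef
  simp only [hgrw]
  set γ : Fin N → ℝ := fun i => σ / (1 + σ / (2 * f i x) * ‖g i‖ ^ 2) with hγdef
  have hγrw : ∀ i, σ / (1 + σ / (2 * f i x) * ‖g i‖ ^ 2) = γ i := fun i => rfl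
  simp only [hγrw]
  -- bound on per-function gradients
  have hsg : ∀ i, ‖g i‖ ^ 2 ≤ 2 * L * f i x := by
    intro i
    exact ngn_sq_grad_le hL (hpos i) x
      (fun y => ngn_descent_lemma hL.le (hdiff i) (hsmooth i) x y)
  -- step size bounds
  have hγb : ∀ i, 2 * σ / 3 ≤ γ i ∧ γ i ≤ σ ∧ σ - γ i ≤ σ ^ 2 * L := by
    intro i
    have hf := hpos i x
    have hc0 : 0 ≤ σ / (2 * f i x) * ‖g i‖ ^ 2 := by positivity
    have hcσL : σ / (2 * f i x) * ‖g i‖ ^ 2 ≤ σ * L := by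
      calc σ / (2 * f i x) * ‖g i‖ ^ 2 ≤ σ / (2 * f i x) * (2 * L * f i x) := by
            apply mul_le_mul_of_nonneg_left (hsg i) (by positivity)
        _ = σ * L := by field_simp
    have hc12 : σ / (2 * f i x) * ‖g i‖ ^ 2 ≤ 1 / 2 := hcσL.trans hσL2
    set c := σ / (2 * f i x) * ‖g i‖ ^ 2 with hcdef
    have hc1 : (0:ℝ) < 1 + c := by linarith
    have hγi : γ i = σ / (1 + c) := rfl
    refine ⟨?_, ?_, ?_⟩
    · rw [hγi, le_div_iff₀ hc1]
      nlinarith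
    · rw [hγi]
      apply div_le_self hσ.le (by linarith)
    · have h9 : σ * (1 - c) ≤ σ / (1 + c) := by
        rw [le_div_iff₀ hc1]
        nlinarith [sq_nonneg c]
      have h10 : σ * c ≤ σ * (σ * L) := mul_le_mul_of_nonneg_left hcσL hσ.le
      rw [hγi]
      nlinarith
  -- error vectors
  set e : Fin N → EuclideanSpace ℝ (Fin d) := fun i => g i - gb with hedef
  have hsumg : ∑ i, g i = (N:ℝ) • gb := by
    rw [hgbdef, hgb_eq x, smul_smul, mul_inv_cancel₀ hNne, one_smul]
  have hsume : ∑ i, e i = 0 := by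
    have : ∑ i, e i = ∑ i, g i - (N:ℝ) • gb := by
      rw [hedef, Finset.sum_sub_distrib, Finset.sum_const, Finset.card_univ, Fintype.card_fin]
      congr 1
      exact (Nat.cast_smul_eq_nsmul ℝ N gb).symm
    rw [this, hsumg, sub_self]
  have hinner0 : ∑ i, ⟪gb, e i⟫ = 0 := by
    rw [← inner_sum, hsume, inner_zero_right]
  have hS : (N:ℝ)⁻¹ * ∑ i, ‖e i‖ ^ 2 ≤ ζsq := by
    have h := hζ x
    have hrw : ∀ i, ‖gradient fbar x - gradient (f i) x‖ ^ 2 = ‖e i‖ ^ 2 := by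
      intro i
      rw [norm_sub_rev]
    simpa only [hrw] using h
  have hG : (0:ℝ) ≤ ‖gb‖ ^ 2 := sq_nonneg _
  -- per-index claim
  have claim : ∀ i, fbar (x - γ i • g i) ≤ fbar x
      + (-(2 * σ / 3) + 3 / 4 * σ ^ 2 * L) * ‖gb‖ ^ 2
      + (L * σ ^ 2 - σ) * ⟪gb, e i⟫ + (3 * σ ^ 2 * L / 2) * ‖e i‖ ^ 2 := by
    intro i
    obtain ⟨hγ1, hγ2, hγ3⟩ := hγb i
    have hd := hdesc (x - γ i • g i)
    have h2 : (x - γ i • g i) - x = -(γ i • g i) := by abel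
    rw [h2] at hd
    have h3 : ⟪gradient fbar x, -(γ i • g i)⟫ = -(γ i * ⟪gb, g i⟫) := by
      rw [inner_neg_right, real_inner_smul_right]
    have h4 : ‖-(γ i • g i)‖ ^ 2 = γ i ^ 2 * ‖g i‖ ^ 2 := by
      rw [norm_neg, norm_smul, mul_pow, Real.norm_eq_abs, sq_abs]
    rw [h3, h4] at hd
    have hgi : g i = gb + e i := by show g i = gb + (g i - gb); abel
    have hip : ⟪gb, g i⟫ = ‖gb‖ ^ 2 + ⟪gb, e i⟫ := by
      rw [hgi, inner_add_right, real_inner_self_eq_norm_sq]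
    have hnm : ‖g i‖ ^ 2 = ‖gb‖ ^ 2 + 2 * ⟪gb, e i⟫ + ‖e i‖ ^ 2 := by
      rw [hgi]
      exact norm_add_sq_real gb (e i)
    rw [hip, hnm] at hd
    have hsqg : (0:ℝ) ≤ ‖gb‖ ^ 2 + 2 * ⟪gb, e i⟫ + ‖e i‖ ^ 2 := by
      rw [← hnm]; positivity
    have harith := ngn_arith (σ := σ) (L := L) (γ := γ i) (G := ‖gb‖ ^ 2)
      (P := ⟪gb, e i⟫) (Q := ‖e i‖ ^ 2) (gbn := ‖gb‖) (en := ‖e i‖)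
      hσ hL hγ1 hγ2 hγ3 rfl rfl (norm_nonneg _) (norm_nonneg _)
      (real_inner_le_norm _ _) hsqg
    linarith
  -- sum up
  have hsumle : ∑ i, fbar (x - γ i • g i) ≤
      ∑ i, (fbar x + (-(2 * σ / 3) + 3 / 4 * σ ^ 2 * L) * ‖gb‖ ^ 2
        + (L * σ ^ 2 - σ) * ⟪gb, e i⟫ + (3 * σ ^ 2 * L / 2) * ‖e i‖ ^ 2) :=
    Finset.sum_le_sum fun i _ => claim i
  have hsum2 : ∑ i, (fbar x + (-(2 * σ / 3) + 3 / 4 * σ ^ 2 * L) * ‖gb‖ ^ 2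
        + (L * σ ^ 2 - σ) * ⟪gb, e i⟫ + (3 * σ ^ 2 * L / 2) * ‖e i‖ ^ 2)
      = (N:ℝ) * (fbar x + (-(2 * σ / 3) + 3 / 4 * σ ^ 2 * L) * ‖gb‖ ^ 2)
        + (3 * σ ^ 2 * L / 2) * ∑ i, ‖e i‖ ^ 2 := by
    rw [Finset.sum_add_distrib, Finset.sum_add_distrib, Finset.sum_const, ← Finset.mul_sum,
      ← Finset.mul_sum, Finset.card_univ, Fintype.card_fin, nsmul_eq_mul, hinner0, mul_zero,
      add_zero]
  have hfinal : (N:ℝ)⁻¹ * ∑ i, fbar (x - γ i • g i) ≤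
      fbar x + (-(2 * σ / 3) + 3 / 4 * σ ^ 2 * L) * ‖gb‖ ^ 2
        + (3 * σ ^ 2 * L / 2) * ((N:ℝ)⁻¹ * ∑ i, ‖e i‖ ^ 2) := by
    calc (N:ℝ)⁻¹ * ∑ i, fbar (x - γ i • g i)
        ≤ (N:ℝ)⁻¹ * ((N:ℝ) * (fbar x + (-(2 * σ / 3) + 3 / 4 * σ ^ 2 * L) * ‖gb‖ ^ 2)
            + (3 * σ ^ 2 * L / 2) * ∑ i, ‖e i‖ ^ 2) := by
          apply mul_le_mul_of_nonneg_left (hsumle.trans_eq hsum2) (by positivity)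
      _ = fbar x + (-(2 * σ / 3) + 3 / 4 * σ ^ 2 * L) * ‖gb‖ ^ 2
            + (3 * σ ^ 2 * L / 2) * ((N:ℝ)⁻¹ * ∑ i, ‖e i‖ ^ 2) := by
          have halg : ∀ A B S : ℝ, (N:ℝ)⁻¹ * ((N:ℝ) * A + B * S) = A + B * ((N:ℝ)⁻¹ * S) := by
            intro A B S
            field_simp
          rw [halg, add_assoc]
  have hC1 : (-(2 * σ / 3) + 3 / 4 * σ ^ 2 * L) ≤ -(σ / 12) := by
    nlinarith [mul_le_mul_of_nonneg_left hσL2 hσ.le]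
  have hC1G : (-(2 * σ / 3) + 3 / 4 * σ ^ 2 * L) * ‖gb‖ ^ 2 ≤ -(σ / 12) * ‖gb‖ ^ 2 :=
    mul_le_mul_of_nonneg_right hC1 hG
  have hC3 : (3 * σ ^ 2 * L / 2) * ((N:ℝ)⁻¹ * ∑ i, ‖e i‖ ^ 2) ≤ 3 * σ ^ 2 * L / 2 * ζsq :=
    mul_le_mul_of_nonneg_left hS (by positivity)
  linarith
end
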